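/- arXiv:2507.09293 — 16 statements merged into one kernel-verified Lean document; each statement's English description precedes it below -/
import Mathlib

section
/- Let S be the complex vector space with basis {W_m | m ∈ ℤ} (realized as ℤ →₀ ℂ with W_m the basis vector at m), let φ : ℤ × ℤ → ℂ, and let ∘ be the ℂ-bilinear operation on S determined by W_m ∘ W_n = φ(m,n)·W_{m+n} for all m,n ∈ ℤ. Then (S, ∘) is an anti-pre-Lie algebraic structure on the Witt algebra (that is, ∘ satisfies the anti-pre-Lie identities x∘(y∘z) − y∘(x∘z) = [y,x]∘z and the Jacobi identity [[x,y],z] + [[y,z],x] + [[z,x],y] = 0 where [x,y] = x∘y − y∘x, and the commutator satisfies W_m∘W_n − W_n∘W_m = (n−m)·W_{m+n}) if and only if φ satisfies: (E1) φ(m,n) − φ(n,m) = n − m for all m,n ∈ ℤ, and (E2) (n−m)·φ(m+n,l) = φ(m,l)·φ(n,m+l) − φ(n,l)·φ(m,n+l) for all m,n,l ∈ ℤ. -/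
/-!
All three conditions on the left are multilinear, so they hold everywhere as soon as they hold
on the basis `W m`, where each becomes a scalar identity. The commutator condition on basis
vectors is exactly (E1). Given (E1), the bracket is the Witt bracket
`[W m, W n] = (n - m) • W (m + n)`, whose Jacobi identity is automatic, and the anti-pre-Lie
identity on `W m, W n, W l` compares the coefficients of `W (m + n + l)`, which is (E2).
-/

/-- The basis vector `W m` of the Witt algebra, realized in `ℤ →₀ ℂ`. -/
noncomputable def W (m : ℤ) : ℤ →₀ ℂ := Finsupp.single m 1

/-- The commutator bracket associated to a bilinear operation. -/
noncomputable def br (mul : (ℤ →₀ ℂ) →ₗ[ℂ] (ℤ →₀ ℂ) →ₗ[ℂ] (ℤ →₀ ℂ))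
    (x y : ℤ →₀ ℂ) : ℤ →₀ ℂ := mul x y - mul y x

namespace LinearMap

variable {ι R M N : Type*} [CommRing R] [AddCommGroup M] [Module R M]
  [AddCommGroup N] [Module R N]

theorem forall_apply₃_eq_iff_basis (b : Module.Basis ι R M)
    (f g : M →ₗ[R] M →ₗ[R] M →ₗ[R] N) :
    (∀ x y z, f x y z = g x y z) ↔ ∀ i j k, f (b i) (b j) (b k) = g (b i) (b j) (b k) :=
  ⟨fun h _ _ _ => h _ _ _, fun h x y z => by
    rw [b.ext fun i => ext_basis b b (h i)]⟩

/-- `(x, y, z) ↦ f y z x` -/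
def rotate₃ (f : M →ₗ[R] M →ₗ[R] M →ₗ[R] N) : M →ₗ[R] M →ₗ[R] M →ₗ[R] N :=
  ((lflip (R₀ := R)).toLinearMap ∘ₗ f).flip

variable (mul : M →ₗ[R] M →ₗ[R] M) (b : Module.Basis ι R M)

def commutator : M →ₗ[R] M →ₗ[R] M := mul - mul.flip

theorem forall_antiPreLie_iff_basis :
    (∀ x y z, mul x (mul y z) - mul y (mul x z) = mul (commutator mul y x) z) ↔
    ∀ i j k, mul (b i) (mul (b j) (b k)) - mul (b j) (mul (b i) (b k)) =
      mul (commutator mul (b j) (b i)) (b k) := by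
  -- `A x y z = mul x (mul y z)`
  let A := (llcomp R M M M ∘ₗ mul).compl₂ mul
  exact forall_apply₃_eq_iff_basis b (A - A.flip) ((commutator mul).flip.compr₂ mul)

theorem forall_jacobi_iff_basis :
    (∀ x y z, mul (mul x y) z + mul (mul y z) x + mul (mul z x) y = 0) ↔
    ∀ i j k, mul (mul (b i) (b j)) (b k) + mul (mul (b j) (b k)) (b i) +
      mul (mul (b k) (b i)) (b j) = 0 := by
  let J := mul.compr₂ mul
  exact forall_apply₃_eq_iff_basis b (J + J.rotate₃ + J.rotate₃.rotate₃) 0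

end LinearMap

section BasisReduction

variable (mul : (ℤ →₀ ℂ) →ₗ[ℂ] (ℤ →₀ ℂ) →ₗ[ℂ] (ℤ →₀ ℂ))

theorem antiPreLie_iff_W :
    (∀ x y z : ℤ →₀ ℂ, mul x (mul y z) - mul y (mul x z) = mul (br mul y x) z) ↔
    ∀ m n l : ℤ, mul (W m) (mul (W n) (W l)) - mul (W n) (mul (W m) (W l)) =
      mul (br mul (W n) (W m)) (W l) :=
  mul.forall_antiPreLie_iff_basis Finsupp.basisSingleOne

theorem jacobi_iff_W :
    (∀ x y z : ℤ →₀ ℂ,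
        br mul (br mul x y) z + br mul (br mul y z) x + br mul (br mul z x) y = 0) ↔
    ∀ m n l : ℤ, br mul (br mul (W m) (W n)) (W l) + br mul (br mul (W n) (W l)) (W m) +
      br mul (br mul (W l) (W m)) (W n) = 0 :=
  mul.commutator.forall_jacobi_iff_basis Finsupp.basisSingleOne

theorem br_smul_left (c : ℂ) (x y : ℤ →₀ ℂ) : br mul (c • x) y = c • br mul x y := by
  simp only [br, map_smul, LinearMap.smul_apply, smul_sub]

end BasisReduction

theorem smul_W_injective (k : ℤ) : Function.Injective fun c : ℂ => c • W k :=
  fun c d h => by simpa [W] using DFunLike.congr_fun h k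

section Witt

variable {φ : ℤ × ℤ → ℂ} {mul : (ℤ →₀ ℂ) →ₗ[ℂ] (ℤ →₀ ℂ) →ₗ[ℂ] (ℤ →₀ ℂ)}
  (hmul : ∀ m n : ℤ, mul (W m) (W n) = φ (m, n) • W (m + n))
include hmul

theorem mul_W_sub_mul_W (m n : ℤ) :
    mul (W m) (W n) - mul (W n) (W m) = (φ (m, n) - φ (n, m)) • W (m + n) := by
  rw [hmul, hmul, add_comm n m, sub_smul]

theorem forall_mul_W_sub_mul_W_iff :
    (∀ m n : ℤ, mul (W m) (W n) - mul (W n) (W m) = ((n : ℂ) - m) • W (m + n)) ↔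
    ∀ m n : ℤ, φ (m, n) - φ (n, m) = (n : ℂ) - m := by
  simp only [mul_W_sub_mul_W hmul, (smul_W_injective _).eq_iff]

variable (hE1 : ∀ m n : ℤ, φ (m, n) - φ (n, m) = (n : ℂ) - m)
include hE1

theorem br_W (m n : ℤ) : br mul (W m) (W n) = ((n : ℂ) - m) • W (m + n) := by
  rw [br, mul_W_sub_mul_W hmul, hE1]

theorem antiPreLie_W_iff (m n l : ℤ) :
    mul (W m) (mul (W n) (W l)) - mul (W n) (mul (W m) (W l)) =
      mul (br mul (W n) (W m)) (W l) ↔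
    ((n : ℂ) - m) * φ (m + n, l) = φ (m, l) * φ (n, m + l) - φ (n, l) * φ (m, n + l) := by
  simp only [br_W hmul hE1, hmul, map_smul, LinearMap.smul_apply, smul_smul]
  rw [add_comm n m, show n + (m + l) = m + n + l by ring, show m + (n + l) = m + n + l by ring,
    ← sub_smul, (smul_W_injective _).eq_iff]
  constructor <;> intro h <;> linear_combination h

theorem jacobi_W (m n l : ℤ) :
    br mul (br mul (W m) (W n)) (W l) + br mul (br mul (W n) (W l)) (W m) +
      br mul (br mul (W l) (W m)) (W n) = 0 := by
  simp only [br_W hmul hE1, br_smul_left, smul_smul]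
  rw [show n + l + m = m + n + l by ring, show l + m + n = m + n + l by ring,
    ← add_smul, ← add_smul]
  convert zero_smul ℂ (W (m + n + l)) using 2
  push_cast
  ring

end Witt

theorem stmt_0 (φ : ℤ × ℤ → ℂ)
    (mul : (ℤ →₀ ℂ) →ₗ[ℂ] (ℤ →₀ ℂ) →ₗ[ℂ] (ℤ →₀ ℂ))
    (hmul : ∀ m n : ℤ, mul (W m) (W n) = φ (m, n) • W (m + n)) :
    ((∀ x y z : ℤ →₀ ℂ,
        mul x (mul y z) - mul y (mul x z) = mul (br mul y x) z) ∧
     (∀ x y z : ℤ →₀ ℂ,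
        br mul (br mul x y) z + br mul (br mul y z) x + br mul (br mul z x) y = 0) ∧
     (∀ m n : ℤ,
        mul (W m) (W n) - mul (W n) (W m) = ((n : ℂ) - m) • W (m + n)))
    ↔
    ((∀ m n : ℤ, φ (m, n) - φ (n, m) = (n : ℂ) - m) ∧
     (∀ m n l : ℤ, ((n : ℂ) - m) * φ (m + n, l)
        = φ (m, l) * φ (n, m + l) - φ (n, l) * φ (m, n + l))) := by
  rw [antiPreLie_iff_W, jacobi_iff_W, forall_mul_W_sub_mul_W_iff hmul]
  constructor
  · rintro ⟨hAntiPreLie, -, hE1⟩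
    exact ⟨hE1, fun m n l => (antiPreLie_W_iff hmul hE1 m n l).1 (hAntiPreLie m n l)⟩
  · rintro ⟨hE1, hE2⟩
    exact ⟨fun m n l => (antiPreLie_W_iff hmul hE1 m n l).2 (hE2 m n l), jacobi_W hmul hE1, hE1⟩
end

section
/- Let V be the complex vector space (ℤ →₀ ℂ) × ℂ, with W_m := (the basis vector of ℤ →₀ ℂ at m, 0) for m ∈ ℤ and c := (0,1). There do not exist functions φ', φ : ℤ × ℤ → ℂ and a ℂ-bilinear operation ∘ on V satisfying W_n ∘ W_m = φ'(n,m)·W_{m+n} + δ_{m+n,0}·φ(n,m)·c and W_n ∘ c = c ∘ W_n = c ∘ c = 0 for all m,n ∈ ℤ, such that ∘ satisfies the anti-pre-Lie identities x∘(y∘z) − y∘(x∘z) = [y,x]∘z and [[x,y],z] + [[y,z],x] + [[z,x],y] = 0 (where [x,y] = x∘y − y∘x) and the commutator equals the Virasoro bracket, i.e., W_n∘W_m − W_m∘W_n = (m−n)·W_{m+n} + δ_{m+n,0}·((n³−n)/12)·c for all m,n ∈ ℤ. -/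
/-- The vector space underlying the Virasoro algebra: `(ℤ →₀ ℂ) × ℂ`. -/
abbrev Vir : Type := (ℤ →₀ ℂ) × ℂ

/-- The basis vector `W m` of the Virasoro algebra. -/
noncomputable def Wv (m : ℤ) : Vir := (Finsupp.single m 1, 0)

/-- The central element `c` of the Virasoro algebra. -/
noncomputable def cV : Vir := (0, 1)

/-- The commutator bracket associated to a bilinear operation on `Vir`. -/
noncomputable def brV (mul : Vir →ₗ[ℂ] Vir →ₗ[ℂ] Vir) (x y : Vir) : Vir :=
  mul x y - mul y x

/-!
Write `a = φ' (0, 0)`. Comparing the coefficients of `W_{k+m+n}` and of `c` in the commutator and in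
the first anti-pre-Lie identity evaluated at `W_n, W_m, W_k` turns the hypotheses into polynomial
equations on `φ'` and `φ`. The `W`-part is the condition that `W_n ∘ W_m = φ' (n, m) W_{m+n}` be an
anti-pre-Lie structure on the Witt algebra, and forces `φ' (m, n) = a - 2m - n` off the diagonal.
Substituting this into the `c`-part expresses `φ (n, -n)` through `φ (0, 0)` and `a`; the remaining
`c`-equations at `(m, n) = (1, 2), (1, 3), (2, 3)` then give `a² - 14a + 36 = 0 = a² - 16a + 72`,
which have no common root.
-/

-- `f (n, m)` is the coefficient in `W_n ∘ W_m = f (n, m) W_{m+n}`.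
structure IsWittAntiPreLie (f : ℤ × ℤ → ℂ) : Prop where
  sub_swap : ∀ n m : ℤ, f (n, m) - f (m, n) = m - n
  mul_sub_mul : ∀ n m k : ℤ,
    f (m, k) * f (n, k + m) - f (n, k) * f (m, k + n) = (n - m) * f (n + m, k)

-- `g (n, m)` is the coefficient of `c` in `W_n ∘ W_m`, relevant only for `m + n = 0`.
structure IsVirasoroCentralCoeffs (f g : ℤ × ℤ → ℂ) : Prop where
  sub_neg : ∀ n : ℤ, g (n, -n) - g (-n, n) = ((n : ℂ) ^ 3 - n) / 12
  mul_sub_mul : ∀ n m k : ℤ, k + m + n = 0 →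
    f (m, k) * g (n, k + m) - f (n, k) * g (m, k + n) = (n - m) * g (n + m, k)

namespace IsWittAntiPreLie

variable {f : ℤ × ℤ → ℂ}

theorem mul_apply_sub_eq_zero (hf : IsWittAntiPreLie f) (x k : ℤ) :
    f (x, k) * (f (k, 0) - f (k + x, 0) - 2 * x) = 0 := by
  have h := hf.mul_sub_mul x 0 k
  have hk := hf.sub_swap 0 k
  have hkx := hf.sub_swap 0 (k + x)
  simp only [add_zero, Int.cast_zero, sub_zero, Int.cast_add] at h hk hkx
  linear_combination h + f (x, k) * (hkx - hk)

theorem apply_zero_right_eq_zero_or (hf : IsWittAntiPreLie f) (m : ℤ) :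
    f (m, 0) = 0 ∨ f (m, 0) = f (0, 0) - 2 * m := by
  have h := hf.mul_apply_sub_eq_zero m 0
  rw [zero_add] at h
  exact (mul_eq_zero.mp h).imp_right fun h ↦ by linear_combination -h

/- If `f (m, 0) = 0 ≠ f (0, 0) - 2 * m`, the relation `mul_apply_sub_eq_zero` propagates along
`(-m, m)`, `(m, -m)`, `(2m, -m)`, `(-m, 2m)` and forces `f (2m, 0) = -2m`, which is neither of the two
values allowed by `apply_zero_right_eq_zero_or`. -/
theorem apply_zero_right (hf : IsWittAntiPreLie f) (m : ℤ) :
    f (m, 0) = f (0, 0) - 2 * m := by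
  obtain h0 | h := hf.apply_zero_right_eq_zero_or m
  swap; · exact h
  by_contra hne
  have ha : f (0, 0) - 2 * m ≠ 0 := fun ha ↦ hne (by linear_combination h0 - ha)
  have hm : m ≠ 0 := by
    rintro rfl
    simp [h0] at hne
  have hE (x k : ℤ) := hf.mul_apply_sub_eq_zero x k
  have h_negm_m : f (-m, m) = 0 := by
    have h := hE (-m) m
    rw [add_neg_cancel, h0] at h
    exact mul_right_cancel₀ ha (by push_cast at h; linear_combination -h)
  have h_m_negm : f (m, -m) = -2 * m := by
    linear_combination (norm := (push_cast; ring)) hf.sub_swap m (-m) + h_negm_m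
  have h_negm_0 : f (-m, 0) = f (0, 0) + 2 * m := by
    have h := hE m (-m)
    rw [neg_add_cancel, h_m_negm] at h
    exact mul_left_cancel₀ (show (-2 * m : ℂ) ≠ 0 by simpa using hm) (by linear_combination h)
  have h_2m_negm : f (2 * m, -m) = 0 := by
    have h := hE (2 * m) (-m)
    rw [show -m + 2 * m = m by ring, h_negm_0, h0] at h
    exact mul_right_cancel₀ ha (by push_cast at h; linear_combination h)
  have h_negm_2m : f (-m, 2 * m) = 3 * m := by
    linear_combination (norm := (push_cast; ring)) hf.sub_swap (-m) (2 * m) + h_2m_negm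
  have h_2m_0 : f (2 * m, 0) = -2 * m := by
    have h := hE (-m) (2 * m)
    rw [show 2 * m + -m = m by ring, h_negm_2m, h0] at h
    exact mul_left_cancel₀ (show (3 * m : ℂ) ≠ 0 by simpa using hm)
      (by push_cast at h; linear_combination h)
  obtain h | h := hf.apply_zero_right_eq_zero_or (2 * m) <;> rw [h_2m_0] at h
  · exact hm (by exact_mod_cast (by linear_combination h / -2 : (m : ℂ) = 0))
  · exact ha (by push_cast at h; linear_combination -h)

theorem apply_of_ne (hf : IsWittAntiPreLie f) {m n : ℤ} (hmn : m ≠ n) :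
    f (m, n) = f (0, 0) - 2 * m - n := by
  have h := hf.mul_sub_mul n m 0
  have hsw := hf.sub_swap n m
  rw [zero_add, zero_add, hf.apply_zero_right m, hf.apply_zero_right n,
    hf.apply_zero_right (n + m)] at h
  push_cast at h
  have hnm : (n : ℂ) - m ≠ 0 := sub_ne_zero.mpr (by exact_mod_cast hmn.symm)
  refine mul_left_cancel₀ (mul_ne_zero two_ne_zero hnm) ?_
  linear_combination h - (f (0, 0) - 2 * m) * hsw

end IsWittAntiPreLie

namespace IsVirasoroCentralCoeffs

variable {f g : ℤ × ℤ → ℂ}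

theorem apply_neg_self (hg : IsVirasoroCentralCoeffs f g) (hf : IsWittAntiPreLie f) {n : ℤ}
    (hn : n ≠ 0) : g (n, -n) = g (0, 0) / 2 - (f (0, 0) - 2 * n) * (n ^ 2 - 1) / 48 := by
  have h := hg.mul_sub_mul (-n) n 0 (by ring)
  rw [zero_add, zero_add, neg_add_cancel, hf.apply_zero_right n, hf.apply_zero_right (-n)] at h
  have hn' : (n : ℂ) ≠ 0 := by exact_mod_cast hn
  refine mul_left_cancel₀ (show (-4 * n : ℂ) ≠ 0 by simpa using hn') ?_
  push_cast at h
  linear_combination h + (f (0, 0) - 2 * n) * hg.sub_neg n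

theorem relation_apply_zero_zero (hg : IsVirasoroCentralCoeffs f g) (hf : IsWittAntiPreLie f)
    {m n : ℤ} (hm : m ≠ 0) (hn : n ≠ 0) (hmn : n + m ≠ 0) (h2mn : 2 * m + n ≠ 0)
    (hm2n : m + 2 * n ≠ 0) :
    24 * (n - m) * g (0, 0) =
      (f (0, 0) - m + n) * (f (0, 0) - 2 * n) * (n ^ 2 - 1)
        - (f (0, 0) + m - n) * (f (0, 0) - 2 * m) * (m ^ 2 - 1)
        - (n - m) * (f (0, 0) - 2 * (n + m)) * ((n + m) ^ 2 - 1) := by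
  have h := hg.mul_sub_mul n m (-(n + m)) (by ring)
  rw [show -(n + m) + m = -n by ring, show -(n + m) + n = -m by ring,
    hf.apply_of_ne (show m ≠ -(n + m) by omega), hf.apply_of_ne (show n ≠ -(n + m) by omega),
    hg.apply_neg_self hf hm, hg.apply_neg_self hf hn, hg.apply_neg_self hf hmn] at h
  push_cast at h
  linear_combination 48 * h

end IsVirasoroCentralCoeffs

theorem IsWittAntiPreLie.not_isVirasoroCentralCoeffs {f : ℤ × ℤ → ℂ} (hf : IsWittAntiPreLie f)
    (g : ℤ × ℤ → ℂ) : ¬ IsVirasoroCentralCoeffs f g := by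
  intro hg
  have h12 := hg.relation_apply_zero_zero hf (m := 1) (n := 2) (by norm_num) (by norm_num)
    (by norm_num) (by norm_num) (by norm_num)
  have h13 := hg.relation_apply_zero_zero hf (m := 1) (n := 3) (by norm_num) (by norm_num)
    (by norm_num) (by norm_num) (by norm_num)
  have h23 := hg.relation_apply_zero_zero hf (m := 2) (n := 3) (by norm_num) (by norm_num)
    (by norm_num) (by norm_num) (by norm_num)
  push_cast at h12 h13 h23
  have hI : f (0, 0) ^ 2 - 14 * f (0, 0) + 36 = 0 := by linear_combination (2 * h12 - h13) / 2
  have hII : f (0, 0) ^ 2 - 16 * f (0, 0) + 72 = 0 := by linear_combination (h12 - h23) / 2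
  have h18 : f (0, 0) = 18 := by linear_combination (hI - hII) / 2
  rw [h18] at hI
  norm_num at hI

theorem coeffs_sub_of_smul_Wv_add_smul_cV_sub {p : ℤ} {a b a' b' a'' b'' : ℂ}
    (h : a • Wv p + b • cV - (a' • Wv p + b' • cV) = a'' • Wv p + b'' • cV) :
    a - a' = a'' ∧ b - b' = b'' := by
  replace h : (a - a') • Wv p + (b - b') • cV = a'' • Wv p + b'' • cV := by rw [← h]; module
  constructor
  · simpa [Wv, cV] using congrArg (fun v : Vir ↦ v.1 p) h
  · simpa [Wv, cV] using congrArg Prod.snd h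

section

variable {φ' φ : ℤ × ℤ → ℂ} {mul : Vir →ₗ[ℂ] Vir →ₗ[ℂ] Vir}

theorem coeffs_of_bracket
    (hWW : ∀ n m : ℤ, mul (Wv n) (Wv m)
      = φ' (n, m) • Wv (m + n) + (if m + n = 0 then φ (n, m) else 0) • cV)
    (hbr : ∀ m n : ℤ, mul (Wv n) (Wv m) - mul (Wv m) (Wv n)
      = ((m : ℂ) - n) • Wv (m + n) + (if m + n = 0 then (((n : ℂ) ^ 3 - n) / 12) else 0) • cV)
    (n m : ℤ) :
    φ' (n, m) - φ' (m, n) = m - n ∧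
      (m + n = 0 → φ (n, m) - φ (m, n) = ((n : ℂ) ^ 3 - n) / 12) := by
  have e := hbr m n
  rw [hWW, hWW, add_comm n m] at e
  obtain ⟨hW, hc⟩ := coeffs_sub_of_smul_Wv_add_smul_cV_sub e
  refine ⟨hW, fun h ↦ ?_⟩
  simpa [h, add_comm n m] using hc

theorem mul_Wv_mul_Wv
    (hWW : ∀ n m : ℤ, mul (Wv n) (Wv m)
      = φ' (n, m) • Wv (m + n) + (if m + n = 0 then φ (n, m) else 0) • cV)
    (hWc : ∀ n : ℤ, mul (Wv n) cV = 0) (n m k : ℤ) :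
    mul (Wv n) (mul (Wv m) (Wv k)) = (φ' (m, k) * φ' (n, k + m)) • Wv (k + m + n)
      + (if k + m + n = 0 then φ' (m, k) * φ (n, k + m) else 0) • cV := by
  rw [hWW m k, map_add, map_smul, map_smul, hWW, hWc, smul_zero, add_zero, smul_add, smul_smul,
    smul_smul, mul_ite, mul_zero]

theorem mul_brV_Wv_Wv
    (hWW : ∀ n m : ℤ, mul (Wv n) (Wv m)
      = φ' (n, m) • Wv (m + n) + (if m + n = 0 then φ (n, m) else 0) • cV)
    (hcW : ∀ n : ℤ, mul cV (Wv n) = 0)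
    (hbr : ∀ m n : ℤ, mul (Wv n) (Wv m) - mul (Wv m) (Wv n)
      = ((m : ℂ) - n) • Wv (m + n) + (if m + n = 0 then (((n : ℂ) ^ 3 - n) / 12) else 0) • cV)
    (m n k : ℤ) :
    mul (brV mul (Wv m) (Wv n)) (Wv k) = (((n : ℂ) - m) * φ' (n + m, k)) • Wv (k + (n + m))
      + (if k + (n + m) = 0 then ((n : ℂ) - m) * φ (n + m, k) else 0) • cV := by
  rw [brV, hbr n m, map_add, map_smul, map_smul, LinearMap.add_apply, LinearMap.smul_apply,
    LinearMap.smul_apply, hWW, hcW, smul_zero, add_zero, smul_add, smul_smul, smul_smul, mul_ite,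
    mul_zero]

theorem coeffs_of_antiPreLie
    (hWW : ∀ n m : ℤ, mul (Wv n) (Wv m)
      = φ' (n, m) • Wv (m + n) + (if m + n = 0 then φ (n, m) else 0) • cV)
    (hWc : ∀ n : ℤ, mul (Wv n) cV = 0) (hcW : ∀ n : ℤ, mul cV (Wv n) = 0)
    (hapl : ∀ x y z : Vir, mul x (mul y z) - mul y (mul x z) = mul (brV mul y x) z)
    (hbr : ∀ m n : ℤ, mul (Wv n) (Wv m) - mul (Wv m) (Wv n)
      = ((m : ℂ) - n) • Wv (m + n) + (if m + n = 0 then (((n : ℂ) ^ 3 - n) / 12) else 0) • cV)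
    (n m k : ℤ) :
    φ' (m, k) * φ' (n, k + m) - φ' (n, k) * φ' (m, k + n) = (n - m) * φ' (n + m, k) ∧
      (k + m + n = 0 → φ' (m, k) * φ (n, k + m) - φ' (n, k) * φ (m, k + n)
        = (n - m) * φ (n + m, k)) := by
  have e := hapl (Wv n) (Wv m) (Wv k)
  rw [mul_Wv_mul_Wv hWW hWc, mul_Wv_mul_Wv hWW hWc, mul_brV_Wv_Wv hWW hcW hbr, ← add_assoc,
    add_right_comm k n m] at e
  obtain ⟨hW, hc⟩ := coeffs_sub_of_smul_Wv_add_smul_cV_sub e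
  exact ⟨hW, fun h ↦ by simpa [h] using hc⟩

end

theorem stmt_1 :
    ¬ ∃ (φ' φ : ℤ × ℤ → ℂ) (mul : Vir →ₗ[ℂ] Vir →ₗ[ℂ] Vir),
      (∀ n m : ℤ, mul (Wv n) (Wv m)
          = φ' (n, m) • Wv (m + n) + (if m + n = 0 then φ (n, m) else 0) • cV) ∧
      (∀ n : ℤ, mul (Wv n) cV = 0) ∧
      (∀ n : ℤ, mul cV (Wv n) = 0) ∧
      mul cV cV = 0 ∧
      (∀ x y z : Vir, mul x (mul y z) - mul y (mul x z) = mul (brV mul y x) z) ∧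
      (∀ x y z : Vir,
        brV mul (brV mul x y) z + brV mul (brV mul y z) x + brV mul (brV mul z x) y = 0) ∧
      (∀ m n : ℤ, mul (Wv n) (Wv m) - mul (Wv m) (Wv n)
          = ((m : ℂ) - n) • Wv (m + n)
            + (if m + n = 0 then (((n : ℂ) ^ 3 - n) / 12) else 0) • cV) := by
  rintro ⟨φ', φ, mul, hWW, hWc, hcW, -, hapl, -, hbr⟩
  have hbracket := coeffs_of_bracket hWW hbr
  have hassoc := coeffs_of_antiPreLie hWW hWc hcW hapl hbr
  have hwitt : IsWittAntiPreLie φ' :=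
    ⟨fun n m ↦ (hbracket n m).1, fun n m k ↦ (hassoc n m k).1⟩
  exact hwitt.not_isVirasoroCentralCoeffs φ
    ⟨fun n ↦ (hbracket n (-n)).2 (neg_add_cancel n), fun n m k ↦ (hassoc n m k).2⟩
end

section
/- Let φ : ℤ × ℤ → ℂ satisfy (E1) and (E2). If φ(0,0) is not an even integer (i.e., φ(0,0) ∉ 2ℤ), then φ(m,0) + 2m = φ(0,0) for all m ∈ ℤ. -/
/-!
Putting `n = 0` in (E2) and using (E1) shows that each `φ(a,0)` is either `0` or `c - 2a`,
where `c = φ(0,0)`. Since `c ≠ 2a`, a zero `φ(a,0) = 0` with `a ≠ 0` propagates through (E1)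
and (E2) along `±a` and forces `c = -a`; so `φ(a,0) = c - 2a` except possibly at `a = -c`.
If it failed at `m = -c`, then `φ(0,l) = -m - l` for every `l ≠ m` while `φ(0,m) = m`; the case
`n = 0` of (E2) then kills both `φ(2m,-m)` and `φ(-m,2m)`, contradicting (E1), which says their
difference is `-3m`.
-/

namespace WittAntiPreLie

def CommutatorAxiom (φ : ℤ × ℤ → ℂ) : Prop :=
  ∀ m n : ℤ, φ (m, n) - φ (n, m) = (n : ℂ) - m

def AntiPreLieAxiom (φ : ℤ × ℤ → ℂ) : Prop :=
  ∀ m n l : ℤ, ((n : ℂ) - m) * φ (m + n, l) = φ (m, l) * φ (n, m + l) - φ (n, l) * φ (m, n + l)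

variable {φ : ℤ × ℤ → ℂ}

theorem CommutatorAxiom.apply_zero_left (h : CommutatorAxiom φ) (a : ℤ) :
    φ (0, a) = φ (a, 0) + a := by
  linear_combination -h a 0

theorem AntiPreLieAxiom.mul_apply_zero_left (h : AntiPreLieAxiom φ) (k l : ℤ) :
    φ (k, l) * (φ (0, k + l) - φ (0, l) + k) = 0 := by
  have h := h k 0 l
  simp only [add_zero, zero_add, Int.cast_zero] at h
  linear_combination -h

theorem AntiPreLieAxiom.apply_eq_zero (h : AntiPreLieAxiom φ) {k l : ℤ}
    (hkl : φ (0, k + l) - φ (0, l) + k ≠ 0) : φ (k, l) = 0 :=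
  (mul_eq_zero.mp (h.mul_apply_zero_left k l)).resolve_right hkl

theorem apply_zero_right_eq_zero_or (h1 : CommutatorAxiom φ) (h2 : AntiPreLieAxiom φ) (a : ℤ) :
    φ (a, 0) = 0 ∨ φ (a, 0) = φ (0, 0) - 2 * a := by
  have h := h2.mul_apply_zero_left a 0
  rw [add_zero, h1.apply_zero_left a] at h
  exact (mul_eq_zero.mp h).imp id fun h => by linear_combination h

theorem eq_neg_of_apply_zero_right_eq_zero (h1 : CommutatorAxiom φ) (h2 : AntiPreLieAxiom φ)
    {a : ℤ} (hc : φ (0, 0) ≠ 2 * a) (ha : a ≠ 0) (hφa : φ (a, 0) = 0) : φ (0, 0) = -a := by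
  have ha' : (a : ℂ) ≠ 0 := Int.cast_ne_zero.mpr ha
  have h0a : φ (0, a) = a := by rw [h1.apply_zero_left, hφa, zero_add]
  have hna : φ (-a, a) = 0 := h2.apply_eq_zero <| by
    rw [neg_add_cancel, h0a, Int.cast_neg]
    exact fun h => hc (by linear_combination h)
  have han : φ (a, -a) = -2 * a := by
    have h := h1 a (-a)
    push_cast at h
    linear_combination h + hna
  have h0na : φ (0, -a) = φ (0, 0) + a := by
    have h := h2.mul_apply_zero_left a (-a)
    rw [add_neg_cancel, han] at h
    linear_combination -(mul_eq_zero.mp h).resolve_left (by simpa using ha')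
  have hna0 : φ (-a, 0) = φ (0, 0) + 2 * a := by
    rw [h1.apply_zero_left] at h0na
    push_cast at h0na
    linear_combination h0na
  -- (E2) at `(a, -a, 0)` reads `-2a c = -(c + 2a)(-2a)`.
  have h := h2 a (-a) 0
  rw [add_neg_cancel, add_zero, add_zero, hφa, hna, hna0, han] at h
  push_cast at h
  have : (a : ℂ) * (φ (0, 0) + a) = 0 := by linear_combination -h / 4
  linear_combination (mul_eq_zero.mp this).resolve_left ha'

theorem apply_zero_right_eq_of_ne_neg (h1 : CommutatorAxiom φ) (h2 : AntiPreLieAxiom φ)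
    {a : ℤ} (hc : φ (0, 0) ≠ 2 * a) (ha : φ (0, 0) ≠ -a) :
    φ (a, 0) = φ (0, 0) - 2 * a := by
  refine (apply_zero_right_eq_zero_or h1 h2 a).resolve_left fun hφa => ha ?_
  rcases eq_or_ne a 0 with rfl | ha0
  · simpa using hφa
  · exact eq_neg_of_apply_zero_right_eq_zero h1 h2 hc ha0 hφa

theorem false_of_apply_zero_left_eq (h1 : CommutatorAxiom φ) (h2 : AntiPreLieAxiom φ) {m : ℤ}
    (hm : m ≠ 0) (hψm : φ (0, m) = m) (hψ : ∀ l ≠ m, φ (0, l) = -m - l) : False := by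
  have h3m : (3 * m : ℂ) ≠ 0 := mul_ne_zero three_ne_zero (Int.cast_ne_zero.mpr hm)
  have hl : φ (2 * m, -m) = 0 := h2.apply_eq_zero <| by
    rw [show 2 * m + -m = m by ring, hψm, hψ (-m) (by omega)]
    convert h3m using 1
    push_cast
    ring
  have hr : φ (-m, 2 * m) = 0 := h2.apply_eq_zero <| by
    rw [show -m + 2 * m = m by ring, hψm, hψ (2 * m) (by omega)]
    convert h3m using 1
    push_cast
    ring
  have h := h1 (2 * m) (-m)
  rw [hl, hr] at h
  exact h3m (by push_cast at h; linear_combination h)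

end WittAntiPreLie

open WittAntiPreLie in
theorem stmt_2 (φ : ℤ × ℤ → ℂ)
    (hE1 : ∀ m n : ℤ, φ (m, n) - φ (n, m) = (n : ℂ) - m)
    (hE2 : ∀ m n l : ℤ, ((n : ℂ) - m) * φ (m + n, l)
        = φ (m, l) * φ (n, m + l) - φ (n, l) * φ (m, n + l))
    (h0 : ¬ ∃ N : ℤ, φ (0, 0) = 2 * N) :
    ∀ m : ℤ, φ (m, 0) + 2 * m = φ (0, 0) := by
  have h1 : CommutatorAxiom φ := hE1
  have h2 : AntiPreLieAxiom φ := hE2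
  have hc : ∀ N : ℤ, φ (0, 0) ≠ 2 * N := fun N h => h0 ⟨N, h⟩
  intro m
  by_contra hne
  have hcm : φ (0, 0) = -m := by
    by_contra h
    exact hne (by rw [apply_zero_right_eq_of_ne_neg h1 h2 (hc m) h]; ring)
  have hm : m ≠ 0 := by
    rintro rfl
    exact hc 0 (by simpa using hcm)
  have hφm : φ (m, 0) = 0 := (apply_zero_right_eq_zero_or h1 h2 m).resolve_right
    fun h => hne (by linear_combination h)
  have hψ : ∀ l ≠ m, φ (0, l) = -m - l := fun l hl => by
    have hcl : φ (0, 0) ≠ -l := by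
      rw [hcm, neg_inj.ne]
      exact_mod_cast hl.symm
    rw [h1.apply_zero_left, apply_zero_right_eq_of_ne_neg h1 h2 (hc l) hcl, hcm]
    ring
  have hψm : φ (0, m) = m := by rw [h1.apply_zero_left, hφm, zero_add]
  exact false_of_apply_zero_left_eq h1 h2 hm hψm hψ
end

section
/- Let φ : ℤ × ℤ → ℂ satisfy (E1) and (E2). If φ(0,0) = 2N for some integer N ∈ ℤ, then φ(m,0) + 2m = φ(0,0) for all m ∈ ℤ. -/
/-!
Putting `m = 0` in (E2) and eliminating `φ(0, ·)` with (E1) gives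
`φ(n,l) (φ(l,0) - φ(n+l,0) - 2n) = 0`; at `l = 0` each `φ(m,0)` is therefore `0` or
`φ(0,0) - 2m`. If `φ(m,0) = 0` with `m ≠ 0`, then (E2) at `(m, -m, m)` reads
`φ(m,m) φ(-m,2m) = -2m²`, so `φ(m,m) ≠ 0`; this forces `φ(2m,0) = -2m ≠ 0`, hence
`φ(0,0) = 2m` and the second alternative holds as well.
-/

section WittAntiPreLie

variable {R : Type*} [CommRing R] {φ : ℤ × ℤ → R}

theorem witt_mul_sub_sub_eq_zero
    (hE1 : ∀ m n : ℤ, φ (m, n) - φ (n, m) = (n : R) - m)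
    (hE2 : ∀ m n l : ℤ, ((n : R) - m) * φ (m + n, l)
        = φ (m, l) * φ (n, m + l) - φ (n, l) * φ (m, n + l))
    (n l : ℤ) : φ (n, l) * (φ (l, 0) - φ (n + l, 0) - 2 * n) = 0 := by
  have h := hE2 0 n l
  have e₁ := hE1 0 l
  have e₂ := hE1 0 (n + l)
  simp only [zero_add, Int.cast_zero, Int.cast_add] at h e₁ e₂
  linear_combination -h - φ (n, l) * e₁ + φ (n, l) * e₂

variable [NoZeroDivisors R]

theorem witt_eq_zero_or_add_two_mul_eq
    (hE1 : ∀ m n : ℤ, φ (m, n) - φ (n, m) = (n : R) - m)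
    (hE2 : ∀ m n l : ℤ, ((n : R) - m) * φ (m + n, l)
        = φ (m, l) * φ (n, m + l) - φ (n, l) * φ (m, n + l))
    (m : ℤ) : φ (m, 0) = 0 ∨ φ (m, 0) + 2 * m = φ (0, 0) := by
  have h := witt_mul_sub_sub_eq_zero hE1 hE2 m 0
  rw [add_zero] at h
  exact (mul_eq_zero.mp h).imp_right fun h' ↦ by linear_combination -h'

variable [CharZero R]

theorem witt_diag_ne_zero
    (hE1 : ∀ m n : ℤ, φ (m, n) - φ (n, m) = (n : R) - m)
    (hE2 : ∀ m n l : ℤ, ((n : R) - m) * φ (m + n, l)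
        = φ (m, l) * φ (n, m + l) - φ (n, l) * φ (m, n + l))
    {m : ℤ} (hm : m ≠ 0) (hφm : φ (m, 0) = 0) : φ (m, m) ≠ 0 := by
  have h := hE2 m (-m) m
  have e := hE1 0 m
  simp only [add_neg_cancel, neg_add_cancel, Int.cast_neg, Int.cast_zero, hφm] at h e
  have hsq : φ (m, m) * φ (-m, m + m) = -2 * (m : R) ^ 2 := by
    linear_combination -h - 2 * (m : R) * e
  have hsq_ne : -2 * (m : R) ^ 2 ≠ 0 :=
    mul_ne_zero (neg_ne_zero.mpr two_ne_zero) (pow_ne_zero 2 (Int.cast_ne_zero.mpr hm))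
  exact left_ne_zero_of_mul (hsq ▸ hsq_ne)

theorem witt_zero_zero_eq_two_mul_of_eq_zero
    (hE1 : ∀ m n : ℤ, φ (m, n) - φ (n, m) = (n : R) - m)
    (hE2 : ∀ m n l : ℤ, ((n : R) - m) * φ (m + n, l)
        = φ (m, l) * φ (n, m + l) - φ (n, l) * φ (m, n + l))
    {m : ℤ} (hφm : φ (m, 0) = 0) : φ (0, 0) = 2 * m := by
  rcases eq_or_ne m 0 with rfl | hm
  · simpa using hφm
  have hmR : (m : R) ≠ 0 := Int.cast_ne_zero.mpr hm
  have h₂ : φ (m + m, 0) = -2 * m := by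
    have h := witt_mul_sub_sub_eq_zero hE1 hE2 m m
    have h' := (mul_eq_zero.mp h).resolve_left (witt_diag_ne_zero hE1 hE2 hm hφm)
    linear_combination hφm - h'
  have h₂ne : φ (m + m, 0) ≠ 0 := by
    rw [h₂]
    exact mul_ne_zero (neg_ne_zero.mpr two_ne_zero) hmR
  have h := (witt_eq_zero_or_add_two_mul_eq hE1 hE2 (m + m)).resolve_left h₂ne
  rw [h₂, Int.cast_add] at h
  linear_combination -h

end WittAntiPreLie

theorem stmt_3_general (φ : ℤ × ℤ → ℂ)
    (hE1 : ∀ m n : ℤ, φ (m, n) - φ (n, m) = (n : ℂ) - m)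
    (hE2 : ∀ m n l : ℤ, ((n : ℂ) - m) * φ (m + n, l)
        = φ (m, l) * φ (n, m + l) - φ (n, l) * φ (m, n + l)) :
    ∀ m : ℤ, φ (m, 0) + 2 * m = φ (0, 0) := by
  intro m
  rcases witt_eq_zero_or_add_two_mul_eq hE1 hE2 m with hφm | h
  · rw [hφm, witt_zero_zero_eq_two_mul_of_eq_zero hE1 hE2 hφm, zero_add]
  · exact h

theorem stmt_3 (φ : ℤ × ℤ → ℂ)
    (hE1 : ∀ m n : ℤ, φ (m, n) - φ (n, m) = (n : ℂ) - m)
    (hE2 : ∀ m n l : ℤ, ((n : ℂ) - m) * φ (m + n, l)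
        = φ (m, l) * φ (n, m + l) - φ (n, l) * φ (m, n + l))
    (N : ℤ) (h0 : φ (0, 0) = 2 * N) :
    ∀ m : ℤ, φ (m, 0) + 2 * m = φ (0, 0) :=
  stmt_3_general φ hE1 hE2
end

section
/- Let φ : ℤ × ℤ → ℂ satisfy (E1) and (E2). Then φ(0,n) = φ(0,0) − n for all n ∈ ℤ. (Equivalently, in the associated representation given by negative left multiplication, −W_0 ∘ W_n = (n − φ(0,0))·W_n, so each W_n spans a one-dimensional weight space.) -/
/-!
Write `ψ n = φ(0,n)` and `c = ψ 0`. Equation (E2) with `m = 0` says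
`φ(a,l) · (a - ψ l + ψ (a+l)) = 0`; for `l = 0`, combined with (E1), it forces
`ψ a ∈ {a, c - a}`. If `ψ n = n ≠ c - n`, the same identity and one more instance of (E2)
give `ψ (2n) = 0`, which is neither `2n` nor `c - 2n`.
-/

section AntiPreLieWitt

variable {φ : ℤ × ℤ → ℂ}

theorem mul_sub_phi_zero_add_phi_zero_eq_zero
    (hE2 : ∀ m n l : ℤ, ((n : ℂ) - m) * φ (m + n, l)
        = φ (m, l) * φ (n, m + l) - φ (n, l) * φ (m, n + l)) (a l : ℤ) :
    φ (a, l) * ((a : ℂ) - φ (0, l) + φ (0, a + l)) = 0 := by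
  have h := hE2 0 a l
  simp only [zero_add, Int.cast_zero, sub_zero] at h
  linear_combination h

variable (hE2 : ∀ m n l : ℤ, ((n : ℂ) - m) * φ (m + n, l)
        = φ (m, l) * φ (n, m + l) - φ (n, l) * φ (m, n + l))
include hE2

theorem phi_zero_two_mul_eq_zero {n : ℤ} (hn : φ (0, n) = n) (hc : φ (0, 0) ≠ 2 * n) :
    φ (0, 2 * n) = 0 := by
  have hn0 : (n : ℂ) ≠ 0 := by
    rintro h
    obtain rfl : n = 0 := by exact_mod_cast h
    exact hc (by simpa using hn)
  have hφ_neg : φ (-n, n) = 0 := by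
    have h := mul_sub_phi_zero_add_phi_zero_eq_zero hE2 (-n) n
    rw [neg_add_cancel, hn] at h
    refine (mul_eq_zero.mp h).resolve_right fun h' ↦ hc ?_
    push_cast at h'
    linear_combination h'
  have hφ_self : φ (n, n) ≠ 0 := by
    intro h
    have h' := hE2 n (-n) n
    rw [add_neg_cancel, neg_add_cancel, hn, hφ_neg, h] at h'
    push_cast at h'
    exact hn0 (pow_eq_zero_iff two_ne_zero |>.mp (by linear_combination -h' / 2))
  have h := mul_sub_phi_zero_add_phi_zero_eq_zero hE2 n n
  rw [hn, ← two_mul] at h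
  linear_combination (mul_eq_zero.mp h).resolve_left hφ_self

variable (hE1 : ∀ m n : ℤ, φ (m, n) - φ (n, m) = (n : ℂ) - m)
include hE1

theorem phi_zero_eq_or (a : ℤ) : φ (0, a) = a ∨ φ (0, a) = φ (0, 0) - a := by
  have hφa0 : φ (a, 0) = φ (0, a) - a := by
    linear_combination -hE1 0 a
  have h := mul_sub_phi_zero_add_phi_zero_eq_zero hE2 a 0
  rw [add_zero, hφa0] at h
  rcases mul_eq_zero.mp h with h | h
  · exact .inl (by linear_combination h)
  · exact .inr (by linear_combination h)

end AntiPreLieWitt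

theorem stmt_5 (φ : ℤ × ℤ → ℂ)
    (hE1 : ∀ m n : ℤ, φ (m, n) - φ (n, m) = (n : ℂ) - m)
    (hE2 : ∀ m n l : ℤ, ((n : ℂ) - m) * φ (m + n, l)
        = φ (m, l) * φ (n, m + l) - φ (n, l) * φ (m, n + l)) :
    ∀ n : ℤ, φ (0, n) = φ (0, 0) - n := by
  intro n
  rcases phi_zero_eq_or hE2 hE1 n with hn | hn
  · by_cases hc : φ (0, 0) = 2 * n
    · rw [hn, hc]; ring
    have h2n := phi_zero_two_mul_eq_zero hE2 hn hc
    rcases phi_zero_eq_or hE2 hE1 (2 * n) with h | h <;> rw [h2n] at h <;> push_cast at h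
    · obtain rfl : n = 0 := by exact_mod_cast (by linear_combination -h / 2 : (n : ℂ) = 0)
      exact absurd (by simpa using hn) hc
    · exact absurd (by linear_combination -h) hc
  · exact hn
end

section
/- Let φ : ℤ × ℤ → ℂ satisfy (E1) and (E2), and suppose φ(0,0) is not an even integer. If m, n ∈ ℤ satisfy m ≠ n, φ(m,0) + 2m = φ(0,0), and φ(n,0) + 2n = φ(0,0), then φ(m+n,0) + 2(m+n) = φ(0,0). -/
/-! Taking `n = 0` in (E2) gives `φ(a,b) (φ(0,a+b) - φ(0,b) + a) = 0`, so `φ(0,·)` drops by `a`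
when passing from `b` to `a + b` whenever `φ(a,b) ≠ 0`. By (E1) the hypothesis on `m` says
`φ(0,m) = φ(0,0) - m`, and `φ(m,n) - φ(n,m) = n - m ≠ 0`, so `φ(m,n)` or `φ(n,m)` is nonzero;
either one carries the relation from `n` (resp. `m`) to `m + n`. -/

section

variable {K : Type*} [Field K] (φ : ℤ × ℤ → K)

theorem phi_zero_add_of_ne_zero
    (hE2 : ∀ m n l : ℤ, ((n : K) - m) * φ (m + n, l)
        = φ (m, l) * φ (n, m + l) - φ (n, l) * φ (m, n + l))
    {a b : ℤ} (hab : φ (a, b) ≠ 0) : φ (0, a + b) = φ (0, b) - a := by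
  have h := hE2 a 0 b
  simp only [add_zero, zero_add, Int.cast_zero] at h
  have hmul : φ (a, b) * (φ (0, a + b) - φ (0, b) + a) = 0 := by linear_combination -h
  linear_combination (mul_eq_zero.mp hmul).resolve_left hab

variable (hE1 : ∀ m n : ℤ, φ (m, n) - φ (n, m) = (n : K) - m)
include hE1

theorem phi_add_two_mul_eq_iff (a : ℤ) :
    φ (a, 0) + 2 * a = φ (0, 0) ↔ φ (0, a) = φ (0, 0) - a := by
  have h := hE1 a 0
  push_cast at h
  constructor
  · intro h'; linear_combination h' - h
  · intro h'; linear_combination h + h'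

theorem phi_ne_phi_swap [CharZero K] {m n : ℤ} (hmn : m ≠ n) : φ (m, n) ≠ φ (n, m) := by
  intro h
  have h1 := hE1 m n
  rw [h, sub_self] at h1
  exact hmn (by exact_mod_cast (sub_eq_zero.mp h1.symm).symm)

theorem phi_zero_add_of_phi_zero_eq [CharZero K]
    (hE2 : ∀ m n l : ℤ, ((n : K) - m) * φ (m + n, l)
        = φ (m, l) * φ (n, m + l) - φ (n, l) * φ (m, n + l))
    {m n : ℤ} (hmn : m ≠ n)
    (hm : φ (0, m) = φ (0, 0) - m) (hn : φ (0, n) = φ (0, 0) - n) :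
    φ (0, m + n) = φ (0, 0) - (m + n) := by
  by_cases hφ : φ (m, n) = 0
  · have hφ' : φ (n, m) ≠ 0 := fun h => phi_ne_phi_swap φ hE1 hmn (hφ.trans h.symm)
    rw [add_comm m n, phi_zero_add_of_ne_zero φ hE2 hφ', hm]
    ring
  · rw [phi_zero_add_of_ne_zero φ hE2 hφ, hn]
    ring

end

theorem stmt_6_general (φ : ℤ × ℤ → ℂ)
    (hE1 : ∀ m n : ℤ, φ (m, n) - φ (n, m) = (n : ℂ) - m)
    (hE2 : ∀ m n l : ℤ, ((n : ℂ) - m) * φ (m + n, l)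
        = φ (m, l) * φ (n, m + l) - φ (n, l) * φ (m, n + l))
    (m n : ℤ) (hmn : m ≠ n)
    (hm : φ (m, 0) + 2 * m = φ (0, 0))
    (hn : φ (n, 0) + 2 * n = φ (0, 0)) :
    φ (m + n, 0) + 2 * ((m : ℂ) + n) = φ (0, 0) := by
  have hsum := phi_zero_add_of_phi_zero_eq φ hE1 hE2 hmn
    ((phi_add_two_mul_eq_iff φ hE1 m).mp hm) ((phi_add_two_mul_eq_iff φ hE1 n).mp hn)
  exact_mod_cast (phi_add_two_mul_eq_iff φ hE1 (m + n)).mpr (by push_cast; exact hsum)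

theorem stmt_6 (φ : ℤ × ℤ → ℂ)
    (hE1 : ∀ m n : ℤ, φ (m, n) - φ (n, m) = (n : ℂ) - m)
    (hE2 : ∀ m n l : ℤ, ((n : ℂ) - m) * φ (m + n, l)
        = φ (m, l) * φ (n, m + l) - φ (n, l) * φ (m, n + l))
    (h0 : ¬ ∃ N : ℤ, φ (0, 0) = 2 * N)
    (m n : ℤ) (hmn : m ≠ n)
    (hm : φ (m, 0) + 2 * m = φ (0, 0))
    (hn : φ (n, 0) + 2 * n = φ (0, 0)) :
    φ (m + n, 0) + 2 * ((m : ℂ) + n) = φ (0, 0) :=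
  stmt_6_general φ hE1 hE2 m n hmn hm hn
end

section
/- Let φ : ℤ × ℤ → ℂ satisfy (E1) and (E2), and suppose φ(0,0) is not an even integer. Then φ(1,0) + 2 = φ(0,0). -/
/-!
Taking `m = 0` in (E2) gives `φ (n, l) * (φ (0, l) - φ (0, n + l) - n) = 0`; together with (E1) this
forces `φ (n, 0) = φ (0, 0) - 2 n` whenever `φ (n, 0) ≠ 0`, which for `n = 1` is the claim. It remains
to rule out `φ (1, 0) = 0`. Then, with `c = φ (0, 0) ∉ {0, 2}`, instances of (E1) and (E2) with indices
in `{-2, …, 2}` successively give `φ (-1, 0) = c + 2`, `φ (-2, 0) = c + 4`,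
`φ (2, 0) = φ (2, -1) = φ (-2, 1) = 0` and `φ (1, 1) = -2/3`; they force `c = 5/8`, and the instance
`(m, n, l) = (1, -2, 1)` of (E2) fails for this value.
-/

/-- (E1) and (E2): `W_m ∘ W_n = φ (m, n) W_{m+n}` is a graded anti-pre-Lie product on the Witt
algebra. -/
structure IsWittAntiPreLie_s7 (φ : ℤ × ℤ → ℂ) : Prop where
  sub_swap : ∀ m n : ℤ, φ (m, n) - φ (n, m) = (n : ℂ) - m
  mul_apply_add : ∀ m n l : ℤ, ((n : ℂ) - m) * φ (m + n, l)
      = φ (m, l) * φ (n, m + l) - φ (n, l) * φ (m, n + l)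

namespace IsWittAntiPreLie_s7

variable {φ : ℤ × ℤ → ℂ}

theorem apply_zero_add_of_ne_zero (h : IsWittAntiPreLie_s7 φ) {n l : ℤ} (hnl : φ (n, l) ≠ 0) :
    φ (0, n + l) = φ (0, l) - n := by
  have e := h.mul_apply_add 0 n l
  norm_num at e
  exact mul_left_cancel₀ hnl (by linear_combination e)

theorem apply_zero_of_ne_zero (h : IsWittAntiPreLie_s7 φ) {n : ℤ} (hn : φ (n, 0) ≠ 0) :
    φ (n, 0) = φ (0, 0) - 2 * n := by
  have row := h.apply_zero_add_of_ne_zero hn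
  have e := h.sub_swap n 0
  norm_num at row e
  linear_combination e + row

theorem apply_neg_one_zero_mul (h : IsWittAntiPreLie_s7 φ) (h10 : φ (1, 0) = 0) :
    φ (-1, 0) * φ (1, -1) = 2 * φ (0, 0) := by
  have e := h.mul_apply_add 1 (-1) 0
  norm_num [h10] at e
  linear_combination -e

theorem apply_neg_one_zero_ne_zero (h : IsWittAntiPreLie_s7 φ) (h10 : φ (1, 0) = 0)
    (hc0 : φ (0, 0) ≠ 0) : φ (-1, 0) ≠ 0 :=
  left_ne_zero_of_mul <| h.apply_neg_one_zero_mul h10 ▸ mul_ne_zero two_ne_zero hc0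

theorem apply_neg_one_zero (h : IsWittAntiPreLie_s7 φ) (h10 : φ (1, 0) = 0)
    (hc0 : φ (0, 0) ≠ 0) : φ (-1, 0) = φ (0, 0) + 2 := by
  have e := h.apply_zero_of_ne_zero (h.apply_neg_one_zero_ne_zero h10 hc0)
  push_cast at e
  linear_combination e

theorem apply_zero_neg_one (h : IsWittAntiPreLie_s7 φ) (h10 : φ (1, 0) = 0)
    (hc0 : φ (0, 0) ≠ 0) : φ (0, -1) = φ (0, 0) + 1 := by
  have e := h.sub_swap (-1) 0
  norm_num at e
  linear_combination h.apply_neg_one_zero h10 hc0 - e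

theorem apply_one_neg_one_mul (h : IsWittAntiPreLie_s7 φ) (h10 : φ (1, 0) = 0)
    (hc0 : φ (0, 0) ≠ 0) : φ (1, -1) * (φ (0, 0) + 2) = 2 * φ (0, 0) := by
  rw [← h.apply_neg_one_zero h10 hc0, mul_comm]
  exact h.apply_neg_one_zero_mul h10

theorem apply_neg_two_zero_mul (h : IsWittAntiPreLie_s7 φ) (h10 : φ (1, 0) = 0) :
    φ (-2, 0) * φ (1, -2) = 3 * φ (-1, 0) := by
  have e := h.mul_apply_add 1 (-2) 0
  norm_num [h10] at e
  linear_combination -e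

theorem apply_neg_two_zero (h : IsWittAntiPreLie_s7 φ) (h10 : φ (1, 0) = 0)
    (hc0 : φ (0, 0) ≠ 0) : φ (-2, 0) = φ (0, 0) + 4 := by
  have hne : φ (-2, 0) ≠ 0 := left_ne_zero_of_mul <| h.apply_neg_two_zero_mul h10 ▸
    mul_ne_zero three_ne_zero (h.apply_neg_one_zero_ne_zero h10 hc0)
  have e := h.apply_zero_of_ne_zero hne
  push_cast at e
  linear_combination e

theorem apply_one_neg_two_mul (h : IsWittAntiPreLie_s7 φ) (h10 : φ (1, 0) = 0)
    (hc0 : φ (0, 0) ≠ 0) : φ (1, -2) * (φ (0, 0) + 4) = 3 * (φ (0, 0) + 2) := by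
  rw [← h.apply_neg_two_zero h10 hc0, ← h.apply_neg_one_zero h10 hc0, mul_comm]
  exact h.apply_neg_two_zero_mul h10

theorem apply_one_one_mul (h : IsWittAntiPreLie_s7 φ) (h10 : φ (1, 0) = 0) :
    φ (1, 1) * φ (-1, 2) = -2 := by
  have e := h.mul_apply_add 1 (-1) 1
  have s := h.sub_swap 1 0
  norm_num [h10] at e s
  linear_combination -e - 2 * s

theorem apply_zero_two (h : IsWittAntiPreLie_s7 φ) (h10 : φ (1, 0) = 0) : φ (0, 2) = 0 := by
  have hne : φ (1, 1) ≠ 0 :=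
    left_ne_zero_of_mul (h.apply_one_one_mul h10 ▸ (by norm_num : (-2 : ℂ) ≠ 0))
  have e := h.apply_zero_add_of_ne_zero hne
  have s := h.sub_swap 1 0
  norm_num [h10] at e s
  linear_combination e + s

theorem apply_two_zero (h : IsWittAntiPreLie_s7 φ) (h10 : φ (1, 0) = 0) (hc2 : φ (0, 0) ≠ 2) :
    φ (2, 0) = 0 := by
  by_contra hne
  have e := h.apply_zero_add_of_ne_zero hne
  norm_num [h.apply_zero_two h10] at e
  exact hc2 (by linear_combination -e)

theorem apply_two_neg_two_mul (h : IsWittAntiPreLie_s7 φ) (h10 : φ (1, 0) = 0)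
    (hc0 : φ (0, 0) ≠ 0) (hc2 : φ (0, 0) ≠ 2) :
    φ (2, -2) * (φ (0, 0) + 4) = 4 * φ (0, 0) := by
  have e := h.mul_apply_add 2 (-2) 0
  norm_num [h.apply_two_zero h10 hc2, h.apply_neg_two_zero h10 hc0] at e
  linear_combination -e

theorem apply_two_neg_one (h : IsWittAntiPreLie_s7 φ) (h10 : φ (1, 0) = 0)
    (hc0 : φ (0, 0) ≠ 0) (hc2 : φ (0, 0) ≠ 2) : φ (2, -1) = 0 := by
  have e := h.mul_apply_add 2 (-1) 0
  norm_num [h10, h.apply_two_zero h10 hc2] at e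
  exact e.resolve_left (h.apply_neg_one_zero_ne_zero h10 hc0)

theorem apply_one_one (h : IsWittAntiPreLie_s7 φ) (h10 : φ (1, 0) = 0)
    (hc0 : φ (0, 0) ≠ 0) (hc2 : φ (0, 0) ≠ 2) : φ (1, 1) = -2 / 3 := by
  have s := h.sub_swap 2 (-1)
  norm_num [h.apply_two_neg_one h10 hc0 hc2] at s
  have e := h.apply_one_one_mul h10
  rw [s] at e
  linear_combination e / 3

theorem apply_neg_two_one (h : IsWittAntiPreLie_s7 φ) (h10 : φ (1, 0) = 0)
    (hc0 : φ (0, 0) ≠ 0) (hc2 : φ (0, 0) ≠ 2) : φ (-2, 1) = 0 := by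
  by_contra hne
  have e := h.apply_zero_add_of_ne_zero hne
  have s := h.sub_swap 1 0
  norm_num [h10, h.apply_zero_neg_one h10 hc0] at e s
  exact hc2 (by linear_combination e + s)

theorem apply_zero_zero_eq (h : IsWittAntiPreLie_s7 φ) (h10 : φ (1, 0) = 0)
    (hc0 : φ (0, 0) ≠ 0) (hc2 : φ (0, 0) ≠ 2) : φ (0, 0) = 5 / 8 := by
  have e₁ := h.mul_apply_add 1 (-1) (-1)
  have e₂ := h.mul_apply_add 2 (-1) (-1)
  norm_num [h.apply_zero_neg_one h10 hc0, h.apply_two_neg_one h10 hc0 hc2] at e₁ e₂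
  have hAB : φ (-1, -1) * φ (1, -2) = 4 * φ (0, 0) + 2 := by
    linear_combination e₁ + h.apply_neg_one_zero_mul h10
  -- evaluate `φ (-1, -1) * φ (1, -2) * φ (2, -2) * (φ (0, 0) + 4)` in two ways
  have hprod : φ (0, 0) * (16 * φ (0, 0) - 10) = 0 := by
    linear_combination (-4 * φ (0, 0)) * hAB
      - φ (-1, -1) * φ (1, -2) * h.apply_two_neg_two_mul h10 hc0 hc2
      - φ (1, -2) * (φ (0, 0) + 4) * e₂ + 3 * φ (1, -1) * h.apply_one_neg_two_mul h10 hc0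
      + 9 * h.apply_one_neg_one_mul h10 hc0
  linear_combination (mul_eq_zero.mp hprod).resolve_left hc0 / 16

theorem false_of_apply_one_zero_eq_zero (h : IsWittAntiPreLie_s7 φ) (h10 : φ (1, 0) = 0)
    (hc0 : φ (0, 0) ≠ 0) (hc2 : φ (0, 0) ≠ 2) : False := by
  have hc := h.apply_zero_zero_eq h10 hc0 hc2
  have hp := h.apply_one_neg_one_mul h10 hc0
  have hq := h.apply_two_neg_two_mul h10 hc0 hc2
  rw [hc] at hp hq
  have e := h.mul_apply_add 1 (-2) 1
  have s₁ := h.sub_swap 1 (-1)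
  have s₂ := h.sub_swap 2 (-2)
  norm_num [h.apply_one_one h10 hc0 hc2, h.apply_neg_two_one h10 hc0 hc2] at e s₁ s₂
  have hp' : φ (-1, 1) = 52 / 21 := by linear_combination (8 / 21 : ℂ) * hp - s₁
  have hq' : φ (-2, 2) = 168 / 37 := by linear_combination (8 / 37 : ℂ) * hq - s₂
  norm_num [hp', hq'] at e

end IsWittAntiPreLie_s7

theorem stmt_7 (φ : ℤ × ℤ → ℂ)
    (hE1 : ∀ m n : ℤ, φ (m, n) - φ (n, m) = (n : ℂ) - m)
    (hE2 : ∀ m n l : ℤ, ((n : ℂ) - m) * φ (m + n, l)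
        = φ (m, l) * φ (n, m + l) - φ (n, l) * φ (m, n + l))
    (h0 : ¬ ∃ N : ℤ, φ (0, 0) = 2 * N) :
    φ (1, 0) + 2 = φ (0, 0) := by
  have h : IsWittAntiPreLie_s7 φ := ⟨hE1, hE2⟩
  have hc0 : φ (0, 0) ≠ 0 := fun hc => h0 ⟨0, by simp [hc]⟩
  have hc2 : φ (0, 0) ≠ 2 := fun hc => h0 ⟨1, by simp [hc]⟩
  by_cases h10 : φ (1, 0) = 0
  · exact (h.false_of_apply_one_zero_eq_zero h10 hc0 hc2).elim
  · have e := h.apply_zero_of_ne_zero h10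
    push_cast at e
    linear_combination e
end

section
/- Let φ : ℤ × ℤ → ℂ satisfy (E1) and (E2), and suppose φ(0,0) is not an even integer. Then φ(2,0) + 4 = φ(0,0). -/
/-!
Write `g n = φ (0, n)` and `a = φ (0, 0)`. Equation (E2) with `m = 0` says
`φ (n, l) * (n - g l + g (n + l)) = 0`, and (E1) says `φ (n, l)` and `φ (l, n)` do not both vanish
for `n ≠ l`; hence `g (n + l) ∈ {g l - n, g n - l}` for `n ≠ l`, and (taking `l = 0`)
`g n ∈ {n, a - n}`. When `a` is not an even integer, no two distinct nonzero `n` satisfy `g n = n`.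
So if `g 2 = 2`, then `g 3 = a - 3` and `g (-1) = a + 1`, which force `g 2 = a - 2` after all.
Either way `φ (2, 0) = g 2 - 2 = a - 4`.
-/

namespace WittAntiPreLie

def CommutatorCondition (φ : ℤ × ℤ → ℂ) : Prop :=
  ∀ m n : ℤ, φ (m, n) - φ (n, m) = (n : ℂ) - m

def AntiPreLieCondition (φ : ℤ × ℤ → ℂ) : Prop :=
  ∀ m n l : ℤ, ((n : ℂ) - m) * φ (m + n, l) = φ (m, l) * φ (n, m + l) - φ (n, l) * φ (m, n + l)

variable {φ : ℤ × ℤ → ℂ}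

lemma eq_zero_or_phi_zero_add
    (hE2 : AntiPreLieCondition φ) (n l : ℤ) : φ (n, l) = 0 ∨ φ (0, n + l) = φ (0, l) - n := by
  have h : φ (n, l) * ((n : ℂ) - φ (0, l) + φ (0, n + l)) = 0 := by
    have h' := hE2 0 n l
    simp only [zero_add, Int.cast_zero, sub_zero] at h'
    linear_combination h'
  exact (mul_eq_zero.mp h).imp_right fun h' ↦ by linear_combination h'

lemma phi_zero_add_of_ne
    (hE1 : CommutatorCondition φ) (hE2 : AntiPreLieCondition φ)
    {n l : ℤ} (hnl : n ≠ l) :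
    φ (0, n + l) = φ (0, l) - n ∨ φ (0, n + l) = φ (0, n) - l := by
  rcases eq_zero_or_phi_zero_add hE2 n l with hn | hn
  · rcases eq_zero_or_phi_zero_add hE2 l n with hl | hl
    · have h := hE1 n l
      rw [hn, hl, sub_zero, eq_comm, sub_eq_zero] at h
      exact absurd (Int.cast_injective h).symm hnl
    · exact Or.inr (add_comm l n ▸ hl)
  · exact Or.inl hn

lemma phi_zero_eq_or
    (hE1 : CommutatorCondition φ) (hE2 : AntiPreLieCondition φ) (n : ℤ) : φ (0, n) = n ∨ φ (0, n) = φ (0, 0) - n := by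
  rcases eq_zero_or_phi_zero_add hE2 n 0 with h | h
  · have h' := hE1 n 0
    rw [h] at h'
    exact Or.inl (by linear_combination -h')
  · exact Or.inr (by simpa using h)

lemma exists_phi_zero_zero_eq_two_mul
    (hE1 : CommutatorCondition φ) (hE2 : AntiPreLieCondition φ)
    {n l : ℤ} (hn0 : n ≠ 0) (hl0 : l ≠ 0) (hnl : n ≠ l)
    (hn : φ (0, n) = n) (hl : φ (0, l) = l) : ∃ N : ℤ, φ (0, 0) = 2 * N := by
  have hn0' : (n : ℂ) ≠ 0 := Int.cast_ne_zero.mpr hn0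
  have hl0' : (l : ℂ) ≠ 0 := Int.cast_ne_zero.mpr hl0
  have hsum := phi_zero_eq_or hE1 hE2 (n + l)
  push_cast at hsum
  rcases phi_zero_add_of_ne hE1 hE2 hnl with h | h <;> simp only [hn, hl] at h <;>
    rcases hsum with h' | h'
  · exact absurd (by linear_combination (h - h') / 2) hn0'
  · exact ⟨l, by linear_combination h - h'⟩
  · exact absurd (by linear_combination (h - h') / 2) hl0'
  · exact ⟨n, by linear_combination h - h'⟩

lemma phi_zero_eq_sub_of_phi_zero_eq_self
    (hE1 : CommutatorCondition φ) (hE2 : AntiPreLieCondition φ)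
    (h0 : ¬ ∃ N : ℤ, φ (0, 0) = 2 * N)
    {n l : ℤ} (hn0 : n ≠ 0) (hl0 : l ≠ 0) (hnl : n ≠ l) (hn : φ (0, n) = n) :
    φ (0, l) = φ (0, 0) - l :=
  (phi_zero_eq_or hE1 hE2 l).resolve_left fun hl ↦
    h0 (exists_phi_zero_zero_eq_two_mul hE1 hE2 hn0 hl0 hnl hn hl)

end WittAntiPreLie

open WittAntiPreLie in
theorem stmt_8 (φ : ℤ × ℤ → ℂ)
    (hE1 : ∀ m n : ℤ, φ (m, n) - φ (n, m) = (n : ℂ) - m)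
    (hE2 : ∀ m n l : ℤ, ((n : ℂ) - m) * φ (m + n, l)
        = φ (m, l) * φ (n, m + l) - φ (n, l) * φ (m, n + l))
    (h0 : ¬ ∃ N : ℤ, φ (0, 0) = 2 * N) :
    φ (2, 0) + 4 = φ (0, 0) := by
  have h20 : φ (2, 0) = φ (0, 2) - 2 := by
    linear_combination (by exact_mod_cast hE1 2 0 : φ (2, 0) - φ (0, 2) = 0 - 2)
  obtain h2 | h2 := phi_zero_eq_or hE1 hE2 2
  · have h3 := phi_zero_eq_sub_of_phi_zero_eq_self hE1 hE2 h0 (n := 2) (l := 3)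
      (by norm_num) (by norm_num) (by norm_num) h2
    have hm1 := phi_zero_eq_sub_of_phi_zero_eq_self hE1 hE2 h0 (n := 2) (l := -1)
      (by norm_num) (by norm_num) (by norm_num) h2
    rcases phi_zero_add_of_ne hE1 hE2 (n := 3) (l := -1) (by norm_num) with h | h <;>
      norm_num at h h3 hm1
    · linear_combination h20 + h + hm1
    · linear_combination h20 + h + h3
  · push_cast at h2
    linear_combination h20 + h2
end

section
/- Let φ : ℤ × ℤ → ℂ satisfy (E1) and (E2). For each m ∈ ℤ let σ_m be the ℂ-linear endomorphism of S = ℤ →₀ ℂ determined on the standard basis {W_n} by σ_m(W_n) = −φ(m,n)·W_{m+n}. Let α ∈ ℂ, and for each m ∈ ℤ let τ_m be the ℂ-linear endomorphism of V = ℤ →₀ ℂ determined on the standard basis {v_i} by τ_m(v_i) = (m+i)·v_{m+i} for i ∈ ℤ, i ≠ 0, and τ_m(v_0) = m(α+m)·v_m. Then there is no ℂ-linear bijection f : S → V such that f ∘ σ_m = τ_m ∘ f for all m ∈ ℤ. (That is, the representation (ρ, S) given by negative left multiplication is not isomorphic to V_α as 𝒲-representations.) -/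
/-!
Intertwining with `τ₀ = τ 0`, which acts diagonally with the distinct eigenvalues `i` on the
basis `v_i`, forces `f` to send each `W_n` to a nonzero multiple `c_n v_{g n}`; surjectivity gives
`g n₀ = 0`, and then `τ_m v_0 = m(α+m) v_m` gives `g (a) = a - n₀` for all large `a`. Comparing
coefficients in `f ∘ σ_m = τ_m ∘ f` and using (E1) yields
`(a + b - n₀)(c_a - c_b) = (b - a) c_{a+b}` for all large `a, b`. On an arithmetic progression
`a = kM` the normalised values `c_{kM} / (kM - n₀)` are then affine in `k` for `3 ≤ k ≤ 8`, and two
more instances of the relation force them to vanish, contradicting `c ≠ 0`.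
-/

open Finsupp Function

section

variable {ι κ K : Type*}

theorem apply_eq_mul_of_map_single_eq_smul [CommSemiring K] {T : (ι →₀ K) →ₗ[K] (ι →₀ K)}
    {e : ι → K} (hT : ∀ i, T (single i 1) = e i • single i 1) (z : ι →₀ K) (i : ι) :
    T z i = e i * z i := by
  induction z using Finsupp.induction_linear with
  | zero => simp
  | add x y hx hy => simp only [map_add, Finsupp.add_apply, hx, hy, mul_add]
  | single a b =>
    rw [← smul_single_one, map_smul, hT, smul_smul, Finsupp.smul_apply, Finsupp.smul_apply]
    rcases eq_or_ne a i with rfl | h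
    · simp [mul_comm]
    · simp [single_eq_of_ne' h]

theorem exists_eq_single_of_map_single_eq_smul [CommRing K] [IsDomain K]
    {T : (ι →₀ K) →ₗ[K] (ι →₀ K)} {e : ι → K} (he : Injective e)
    (hT : ∀ i, T (single i 1) = e i • single i 1) {y : ι →₀ K} {μ : K} (hy : T y = μ • y)
    (hy0 : y ≠ 0) : ∃ i c, c ≠ 0 ∧ y = single i c := by
  have eigen : ∀ i ∈ y.support, e i = μ := fun i hi => by
    have := congr($hy i)
    rw [apply_eq_mul_of_map_single_eq_smul hT, Finsupp.smul_apply, smul_eq_mul] at this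
    exact mul_right_cancel₀ (mem_support_iff.1 hi) this
  obtain ⟨i₀, hi₀⟩ := support_nonempty_iff.2 hy0
  obtain ⟨c, rfl⟩ := support_subset_singleton'.1 fun i hi =>
    Finset.mem_singleton.2 (he ((eigen i hi).trans (eigen i₀ hi₀).symm))
  exact ⟨i₀, c, by simpa using hi₀, rfl⟩

theorem surjective_of_map_single_eq_single [Semiring K] [Nontrivial K]
    {f : (ι →₀ K) →ₗ[K] (κ →₀ K)} (hf : Surjective f) {g : ι → κ}
    (hfg : ∀ n, ∃ c, f (single n 1) = single (g n) c) : Surjective g := by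
  have hrange : ∀ z, f z ∈ supported K K (Set.range g) := by
    intro z
    induction z using Finsupp.induction_linear with
    | zero => simp
    | add x y hx hy => rw [map_add]; exact add_mem hx hy
    | single n b =>
      obtain ⟨c, hc⟩ := hfg n
      rw [← smul_single_one, map_smul, hc]
      exact Submodule.smul_mem _ _ (single_mem_supported K c (Set.mem_range_self n))
  intro i
  obtain ⟨z, hz⟩ := hf (single i 1)
  have := (mem_supported K _).1 (hz ▸ hrange z)
  exact this (by simp)

end

theorem eq_zero_of_add_relation_le_eight {K : Type*} [Field K] [CharZero K] {x : ℕ → K} {u n : K}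
    (hu : u ≠ 0)
    (h : ∀ k l : ℕ, 1 ≤ k → 1 ≤ l → k + l ≤ 8 →
      (k * u - n) * x k - (l * u - n) * x l = (l - k) * u * x (k + l)) :
    x 3 = 0 := by
  have collinear : ∀ i j k : ℕ, 1 ≤ i → 1 ≤ j → 1 ≤ k → i + k ≤ 8 → j + k ≤ 8 → i + j ≤ 8 →
      ((j : K) - i) * x (i + j) + ((k : K) - j) * x (j + k) = ((k : K) - i) * x (i + k) := by
    intro i j k hi hj hk hik hjk hij
    refine mul_left_cancel₀ hu ?_
    linear_combination -(h i j hi hj hij + h j k hj hk hjk - h i k hi hk hik)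
  have c123 := collinear 1 2 3
  have c124 := collinear 1 2 4
  have c134 := collinear 1 3 4
  have c135 := collinear 1 3 5
  have r34 := h 3 4
  have r35 := h 3 5
  norm_num at c123 c124 c134 c135 r34 r35
  have hX : (6 * u - n) * x 3 = (8 * u - n) * x 4 := by
    linear_combination r34 + 3 * u * c123 + u * c134
  have hY : (16 * u - 2 * n) * x 3 = (20 * u - 2 * n) * x 4 := by
    linear_combination r35 + (11 * u - n) * c123 + u * c135 + 2 * u * c124
  have h34 : x 3 = x 4 := by
    refine mul_left_cancel₀ (mul_ne_zero (by norm_num : (4 : K) ≠ 0) hu) ?_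
    linear_combination hY - 2 * hX
  refine mul_left_cancel₀ (mul_ne_zero two_ne_zero hu) ?_
  linear_combination (8 * u - n) * h34 - hX

theorem eq_zero_of_add_relation {K : Type*} [Field K] [CharZero K] {c : ℤ → K} {n M : ℤ}
    (hnM : n < M) (hM : 0 < M)
    (h : ∀ a b : ℤ, M ≤ a → M ≤ b → ((a : K) + b - n) * (c a - c b) = ((b : K) - a) * c (a + b)) :
    c (3 * M) = 0 := by
  have hne : ∀ k : ℕ, 1 ≤ k → (k : K) * M - n ≠ 0 := fun k hk => by
    have : n < k * M := by nlinarith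
    exact_mod_cast sub_ne_zero.2 this.ne'
  have hx3 := eq_zero_of_add_relation_le_eight (x := fun k => c (k * M) / ((k : K) * M - n))
    (Int.cast_ne_zero.2 hM.ne') fun k l hk hl hkl => by
      have := h (k * M) (l * M) (by nlinarith) (by nlinarith)
      rw [← add_mul] at this
      push_cast at this ⊢
      rw [mul_div_cancel₀ _ (hne k hk), mul_div_cancel₀ _ (hne l hl), mul_div_assoc',
        eq_div_iff (by exact_mod_cast hne (k + l) (by omega))]
      linear_combination this
  simpa using (div_eq_zero_iff.1 hx3).resolve_right (hne 3 (by norm_num))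

/-- `W_m · v_i = actionCoeff α m i • v_{m+i}` in `V_α`. -/
def actionCoeff (α : ℂ) (m i : ℤ) : ℂ := if i = 0 then m * (α + m) else m + i

theorem actionCoeff_zero_right (α : ℂ) (m : ℤ) : actionCoeff α m 0 = m * (α + m) := if_pos rfl

theorem actionCoeff_of_ne_zero (α : ℂ) (m : ℤ) {i : ℤ} (hi : i ≠ 0) :
    actionCoeff α m i = m + i := if_neg hi

theorem actionCoeff_zero_left (α : ℂ) (i : ℤ) : actionCoeff α 0 i = i := by
  rcases eq_or_ne i 0 with rfl | hi
  · simp [actionCoeff_zero_right]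
  · simp [actionCoeff_of_ne_zero α 0 hi]

theorem exists_forall_actionCoeff_ne_zero (α : ℂ) :
    ∃ B : ℤ, ∀ m : ℤ, B < m → actionCoeff α m 0 ≠ 0 := by
  simp only [actionCoeff_zero_right]
  by_cases hroot : ∃ a : ℤ, α + a = 0
  · obtain ⟨a, ha⟩ := hroot
    refine ⟨max a 0, fun m hm => mul_ne_zero (by exact_mod_cast (by omega : m ≠ 0)) fun hm' => ?_⟩
    have : (m : ℂ) = a := by linear_combination hm' - ha
    have : m = a := by exact_mod_cast this
    omega
  · exact ⟨0, fun m hm => mul_ne_zero (by exact_mod_cast hm.ne') fun h => hroot ⟨m, h⟩⟩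

theorem apply_W_eq_single {α : ℂ} {τ : ℤ → ((ℤ →₀ ℂ) →ₗ[ℂ] (ℤ →₀ ℂ))}
    (hτ : ∀ m i : ℤ, i ≠ 0 → τ m (W i) = ((m : ℂ) + i) • W (m + i))
    (hτ0 : ∀ m : ℤ, τ m (W 0) = ((m : ℂ) * (α + m)) • W m) (m i : ℤ) :
    τ m (W i) = single (m + i) (actionCoeff α m i) := by
  rcases eq_or_ne i 0 with rfl | hi
  · rw [hτ0, actionCoeff_zero_right, add_zero, W, smul_single_one]
  · rw [hτ m i hi, actionCoeff_of_ne_zero α m hi, W, smul_single_one]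

theorem shift_eq_and_coeff_eq_of_intertwines {φ : ℤ × ℤ → ℂ} {α : ℂ}
    {σ τ : ℤ → ((ℤ →₀ ℂ) →ₗ[ℂ] (ℤ →₀ ℂ))} {f : (ℤ →₀ ℂ) →ₗ[ℂ] (ℤ →₀ ℂ)} {g : ℤ → ℤ}
    {c : ℤ → ℂ} (hσ : ∀ m n : ℤ, σ m (W n) = (-φ (m, n)) • W (m + n))
    (hτ : ∀ m i : ℤ, i ≠ 0 → τ m (W i) = ((m : ℂ) + i) • W (m + i))
    (hτ0 : ∀ m : ℤ, τ m (W 0) = ((m : ℂ) * (α + m)) • W m)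
    (hf : ∀ (m : ℤ) (x : ℤ →₀ ℂ), f (σ m x) = τ m (f x))
    (hfW : ∀ n, f (W n) = single (g n) (c n)) {m n : ℤ} (hmn : c n * actionCoeff α m (g n) ≠ 0) :
    g (m + n) = m + g n ∧ -φ (m, n) * c (m + n) = c n * actionCoeff α m (g n) := by
  have h := hf m (W n)
  rw [hσ, map_smul, hfW, hfW, smul_single, smul_eq_mul, ← smul_single_one (g n) (c n), map_smul,
    ← W, apply_W_eq_single hτ hτ0, smul_single, smul_eq_mul] at h
  exact ((single_eq_single_iff _ _ _ _).1 h).resolve_right fun h' => hmn h'.2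

theorem coeff_add_relation {φ : ℤ × ℤ → ℂ} {α : ℂ} {g : ℤ → ℤ} {c : ℤ → ℂ} {n₀ : ℤ}
    (hE1 : ∀ m n : ℤ, φ (m, n) - φ (n, m) = (n : ℂ) - m)
    (hshift : ∀ m n, c n * actionCoeff α m (g n) ≠ 0 →
      g (m + n) = m + g n ∧ -φ (m, n) * c (m + n) = c n * actionCoeff α m (g n))
    (hc : ∀ n, c n ≠ 0) (hn₀ : g n₀ = 0) {a b : ℤ} (ha : actionCoeff α (a - n₀) 0 ≠ 0)
    (hb : actionCoeff α (b - n₀) 0 ≠ 0) (hab : actionCoeff α (a + b - n₀) 0 ≠ 0) :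
    ((a : ℂ) + b - n₀) * (c a - c b) = ((b : ℂ) - a) * c (a + b) := by
  have hg : ∀ a, actionCoeff α (a - n₀) 0 ≠ 0 → g a = a - n₀ := fun a ha => by
    have := (hshift (a - n₀) n₀ (by rw [hn₀]; exact mul_ne_zero (hc n₀) ha)).1
    rwa [sub_add_cancel, hn₀, add_zero] at this
  have hcoeff : ∀ a b, actionCoeff α (a - n₀) 0 ≠ 0 → actionCoeff α (a + b - n₀) 0 ≠ 0 →
      -φ (b, a) * c (a + b) = c a * ((a : ℂ) + b - n₀) := fun a b ha hab => by
    have hne : a - n₀ ≠ 0 := fun h => ha (by simp [h, actionCoeff_zero_right])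
    have hact : actionCoeff α b (g a) = (a : ℂ) + b - n₀ := by
      rw [hg a ha, actionCoeff_of_ne_zero α b hne]; push_cast; ring
    have habne : (a : ℂ) + b - n₀ ≠ 0 := by
      rw [actionCoeff_zero_right] at hab; exact_mod_cast left_ne_zero_of_mul hab
    have := (hshift b a (by rw [hact]; exact mul_ne_zero (hc a) habne)).2
    rwa [add_comm b a, hact] at this
  have h1 := hcoeff a b ha hab
  have h2 := hcoeff b a hb (by rwa [add_comm b a])
  rw [add_comm b a] at h2
  linear_combination c (a + b) * hE1 a b - h1 + h2

theorem stmt_11_general (φ : ℤ × ℤ → ℂ)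
    (hE1 : ∀ m n : ℤ, φ (m, n) - φ (n, m) = (n : ℂ) - m)
    (α : ℂ)
    (σ τ : ℤ → ((ℤ →₀ ℂ) →ₗ[ℂ] (ℤ →₀ ℂ)))
    (hσ : ∀ m n : ℤ, σ m (W n) = (-φ (m, n)) • W (m + n))
    (hτ : ∀ m i : ℤ, i ≠ 0 → τ m (W i) = ((m : ℂ) + i) • W (m + i))
    (hτ0 : ∀ m : ℤ, τ m (W 0) = ((m : ℂ) * (α + m)) • W m) :
    ¬ ∃ f : (ℤ →₀ ℂ) ≃ₗ[ℂ] (ℤ →₀ ℂ),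
      ∀ (m : ℤ) (x : ℤ →₀ ℂ), f (σ m x) = τ m (f x) := by
  rintro ⟨f, hf⟩
  have hτ_zero : ∀ i, τ 0 (single i 1) = (i : ℂ) • single i 1 := fun i => by
    rw [← W, apply_W_eq_single hτ hτ0, zero_add, actionCoeff_zero_left, W, smul_single_one]
  have heigen : ∀ n, ∃ i c, c ≠ 0 ∧ f (W n) = single i c := fun n =>
    exists_eq_single_of_map_single_eq_smul Int.cast_injective hτ_zero
      (by rw [← hf, hσ, map_smul, zero_add]) (f.map_ne_zero_iff.2 (single_ne_zero.2 one_ne_zero))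
  choose g c hc hfW using heigen
  obtain ⟨n₀, hn₀⟩ :=
    surjective_of_map_single_eq_single (f := f.toLinearMap) f.surjective (fun n => ⟨c n, hfW n⟩) 0
  obtain ⟨B, hB⟩ := exists_forall_actionCoeff_ne_zero α
  have hshift := fun m n (h : c n * actionCoeff α m (g n) ≠ 0) =>
    shift_eq_and_coeff_eq_of_intertwines (f := f.toLinearMap) hσ hτ hτ0 hf hfW h
  exact hc _ (eq_zero_of_add_relation (n := n₀) (M := max (B + n₀) (max n₀ 0) + 1) (by omega)
    (by omega) fun a b ha hb =>
      coeff_add_relation hE1 hshift hc hn₀ (hB _ (by omega)) (hB _ (by omega)) (hB _ (by omega)))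

theorem stmt_11 (φ : ℤ × ℤ → ℂ)
    (hE1 : ∀ m n : ℤ, φ (m, n) - φ (n, m) = (n : ℂ) - m)
    (hE2 : ∀ m n l : ℤ, ((n : ℂ) - m) * φ (m + n, l)
        = φ (m, l) * φ (n, m + l) - φ (n, l) * φ (m, n + l))
    (α : ℂ)
    (σ τ : ℤ → ((ℤ →₀ ℂ) →ₗ[ℂ] (ℤ →₀ ℂ)))
    (hσ : ∀ m n : ℤ, σ m (W n) = (-φ (m, n)) • W (m + n))
    (hτ : ∀ m i : ℤ, i ≠ 0 → τ m (W i) = ((m : ℂ) + i) • W (m + i))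
    (hτ0 : ∀ m : ℤ, τ m (W 0) = ((m : ℂ) * (α + m)) • W m) :
    ¬ ∃ f : (ℤ →₀ ℂ) ≃ₗ[ℂ] (ℤ →₀ ℂ),
      ∀ (m : ℤ) (x : ℤ →₀ ℂ), f (σ m x) = τ m (f x) :=
  stmt_11_general φ hE1 α σ τ hσ hτ hτ0
end

section
/- Let φ : ℤ × ℤ → ℂ satisfy (E1) and (E2). For each m ∈ ℤ let σ_m be the ℂ-linear endomorphism of S = ℤ →₀ ℂ determined on the standard basis {W_n} by σ_m(W_n) = −φ(m,n)·W_{m+n}. Let β ∈ ℂ, and for each m ∈ ℤ let τ_m be the ℂ-linear endomorphism of V = ℤ →₀ ℂ determined on the standard basis {v_i} by τ_m(v_i) = i·v_{m+i} whenever m+i ≠ 0, and τ_m(v_{−m}) = −m(β+m)·v_0. Then there is no ℂ-linear bijection f : S → V such that f ∘ σ_m = τ_m ∘ f for all m ∈ ℤ. (That is, the representation (ρ, S) given by negative left multiplication is not isomorphic to V^β as 𝒲-representations.) -/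
section ColumnVanishing

variable {φ : ℤ × ℤ → ℂ}

lemma phi_mul_phi_zero_sub_eq_zero
    (hE2 : ∀ m n l : ℤ, ((n : ℂ) - m) * φ (m + n, l)
        = φ (m, l) * φ (n, m + l) - φ (n, l) * φ (m, n + l))
    (m l : ℤ) : φ (m, l) * (φ (0, l) - φ (0, m + l) - m) = 0 := by
  have h := hE2 m 0 l
  simp only [add_zero, zero_add, Int.cast_zero] at h
  linear_combination h

lemma not_forall_phi_column_eq_zero
    (hE1 : ∀ m n : ℤ, φ (m, n) - φ (n, m) = (n : ℂ) - m)
    (hE2 : ∀ m n l : ℤ, ((n : ℂ) - m) * φ (m + n, l)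
        = φ (m, l) * φ (n, m + l) - φ (n, l) * φ (m, n + l))
    (s : ℤ) : ¬ ∀ m : ℤ, φ (m, s) = 0 := by
  intro hcol
  have hrow : ∀ l : ℤ, φ (s, l) = (l : ℂ) - s := fun l => by
    linear_combination hE1 s l + hcol l
  have hstar := phi_mul_phi_zero_sub_eq_zero hE2
  rcases eq_or_ne s 0 with rfl | hs
  · have h_vanish : ∀ m l : ℤ, m ≠ 0 → φ (m, l) = 0 := fun m l hm => by
      have h : φ (m, l) * (-2 * m) = 0 := by
        have h := hstar m l
        rw [hrow, hrow] at h
        push_cast at h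
        linear_combination h
      exact (mul_eq_zero.mp h).resolve_right (mul_ne_zero (by norm_num) (by exact_mod_cast hm))
    have h := hE1 1 2
    rw [h_vanish 1 2 one_ne_zero, h_vanish 2 1 two_ne_zero] at h
    norm_num at h
  · have hs' : (s : ℂ) ≠ 0 := by exact_mod_cast hs
    have h00 : φ (0, 0) = s := by
      have h := hstar s 0
      rw [hrow, add_zero, hcol] at h
      simpa [hs', sub_eq_zero] using h
    have h0s : φ (0, -s) = 2 * s := by
      have h := hstar s (-s)
      rw [hrow, add_neg_cancel, h00] at h
      have h2 : ((-s : ℤ) : ℂ) - s ≠ 0 := fun h2 => hs' (by push_cast at h2; linear_combination -h2 / 2)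
      linear_combination (mul_eq_zero.mp h).resolve_left h2
    have h := hE2 (-s) s 0
    simp only [neg_add_cancel, add_zero] at h
    have h_s0 : φ (-s, 0) = 3 * s := by
      have h1 := hE1 (-s) 0
      push_cast at h1
      linear_combination h1 + h0s
    rw [h00, hrow, hrow, hcol, h_s0] at h
    push_cast at h
    exact hs' (pow_eq_zero_iff two_ne_zero |>.mp (by linear_combination h / 8))

end ColumnVanishing

lemma Finsupp.apply_add_eq_mul_of_apply_single {G R : Type*} [AddGroup G] [Semiring R]
    (g : (G →₀ R) →ₗ[R] (G →₀ R)) (a : G → R) (m : G)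
    (hg : ∀ n : G, g (Finsupp.single n 1) = a n • Finsupp.single (m + n) 1)
    (x : G →₀ R) (s : G) : g x (m + s) = x s * a s := by
  induction x using Finsupp.induction_linear with
  | zero => simp
  | add x y hx hy => simp [hx, hy, add_mul]
  | single n c =>
    rw [← mul_one c, ← smul_eq_mul, ← Finsupp.smul_single, map_smul, hg]
    by_cases hn : n = s <;> simp [hn]

theorem stmt_12 (φ : ℤ × ℤ → ℂ)
    (hE1 : ∀ m n : ℤ, φ (m, n) - φ (n, m) = (n : ℂ) - m)
    (hE2 : ∀ m n l : ℤ, ((n : ℂ) - m) * φ (m + n, l)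
        = φ (m, l) * φ (n, m + l) - φ (n, l) * φ (m, n + l))
    (β : ℂ)
    (σ τ : ℤ → ((ℤ →₀ ℂ) →ₗ[ℂ] (ℤ →₀ ℂ)))
    (hσ : ∀ m n : ℤ, σ m (W n) = (-φ (m, n)) • W (m + n))
    (hτ : ∀ m i : ℤ, m + i ≠ 0 → τ m (W i) = (i : ℂ) • W (m + i))
    (hτ0 : ∀ m : ℤ, τ m (W (-m)) = (-(m : ℂ) * (β + m)) • W 0) :
    ¬ ∃ f : (ℤ →₀ ℂ) ≃ₗ[ℂ] (ℤ →₀ ℂ),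
      ∀ (m : ℤ) (x : ℤ →₀ ℂ), f (σ m x) = τ m (f x) := by
  rintro ⟨f, hf⟩
  have hτW0 : ∀ m : ℤ, τ m (W 0) = 0 := fun m => by
    rcases eq_or_ne m 0 with rfl | hm
    · simpa using hτ0 0
    · simpa using hτ m 0 (by simpa using hm)
  set u := f.symm (W 0)
  have hu : u ≠ 0 := by simp [u, W]
  have hσu : ∀ m : ℤ, σ m u = 0 := fun m =>
    f.injective (by rw [hf, f.apply_symm_apply, hτW0, map_zero])
  obtain ⟨s, hs⟩ := Finsupp.ne_iff.mp hu
  refine not_forall_phi_column_eq_zero hE1 hE2 s fun m => ?_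
  have h := Finsupp.apply_add_eq_mul_of_apply_single (σ m) (fun n => -φ (m, n)) m (hσ m) u s
  rw [hσu, Finsupp.zero_apply, eq_comm, mul_eq_zero, neg_eq_zero] at h
  exact h.resolve_left hs
end

section
/- Let φ : ℤ × ℤ → ℂ satisfy (E1) and (E2). For each m ∈ ℤ let σ_m be the ℂ-linear endomorphism of S = ℤ →₀ ℂ determined on the standard basis {W_n} by σ_m(W_n) = −φ(m,n)·W_{m+n}. Let α, β ∈ ℂ with 0 ≤ Re α < 1 and β ≠ 2, and for each m ∈ ℤ let τ_m be the ℂ-linear endomorphism of V = ℤ →₀ ℂ determined on the standard basis {v_i} by τ_m(v_i) = (α + i + mβ)·v_{m+i}. Then there is no ℂ-linear bijection f : S → V such that f ∘ σ_m = τ_m ∘ f for all m ∈ ℤ. (That is, the representation (ρ, S) given by negative left multiplication is not isomorphic to V_{α,β} as 𝒲-representations when β ≠ 2.) -/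
namespace Finsupp

variable {ι κ K : Type*}

theorem eq_and_eq_zero_or_eq_of_single_eq_single {M : Type*} [Zero M] {a a' : ι} {b b' : M}
    (h : single a b = single a' b') : b = b' ∧ (b = 0 ∨ a = a') := by
  rcases (single_eq_single_iff a a' b b').mp h with ⟨ha, hb⟩ | ⟨hb, hb'⟩
  · exact ⟨hb, Or.inr ha⟩
  · exact ⟨hb.trans hb'.symm, Or.inl hb⟩

theorem apply_eq_mul_of_diagonal [CommSemiring K] {T : (ι →₀ K) →ₗ[K] (ι →₀ K)} {g : ι → K}
    (hT : ∀ i, T (single i 1) = g i • single i 1) (x : ι →₀ K) (j : ι) :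
    T x j = g j * x j := by
  induction x using Finsupp.induction_linear with
  | zero => simp
  | add x y hx hy => simp [hx, hy, mul_add]
  | single i a =>
    rw [← smul_single_one, map_smul, hT]
    by_cases h : i = j
    · subst h; simp [mul_comm]
    · simp [h]

variable [CommRing K] [IsDomain K]

theorem exists_eq_single_of_diagonal_eigenvector {T : (ι →₀ K) →ₗ[K] (ι →₀ K)} {g : ι → K}
    (hT : ∀ i, T (single i 1) = g i • single i 1) (hg : Function.Injective g)
    {x : ι →₀ K} {μ : K} (hx : T x = μ • x) (hx0 : x ≠ 0) :
    ∃ k, x = single k (x k) := by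
  have hsupp : ∀ j ∈ x.support, g j = μ := fun j hj => by
    have h := apply_eq_mul_of_diagonal hT x j
    rw [hx, smul_apply, smul_eq_mul] at h
    exact (mul_right_cancel₀ (mem_support_iff.mp hj) h).symm
  obtain ⟨k, hk⟩ := support_nonempty_iff.mpr hx0
  refine ⟨k, support_subset_singleton.mp fun j hj => Finset.mem_singleton.mpr ?_⟩
  exact hg ((hsupp j hj).trans (hsupp k hk).symm)

theorem exists_injective_smul_single_of_intertwines_diagonal
    {S : (ι →₀ K) →ₗ[K] (ι →₀ K)} {T : (κ →₀ K) →ₗ[K] (κ →₀ K)} {d : ι → K} {g : κ → K}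
    (hS : ∀ i, S (single i 1) = d i • single i 1) (hT : ∀ k, T (single k 1) = g k • single k 1)
    (hg : Function.Injective g) (f : (ι →₀ K) ≃ₗ[K] (κ →₀ K)) (hf : ∀ x, f (S x) = T (f x)) :
    ∃ (p : ι → κ) (c : ι → K), Function.Injective p ∧ (∀ i, c i ≠ 0) ∧
      ∀ i, f (single i 1) = c i • single (p i) 1 := by
  have hsingle (i : ι) : ∃ k, f (single i 1) = single k (f (single i 1) k) :=
    exists_eq_single_of_diagonal_eigenvector hT hg (by rw [← hf, hS, map_smul]) (by simp)
  choose p hp using hsingle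
  set c := fun i => f (single i 1) (p i)
  have hf₁ (i : ι) : f (single i 1) = c i • single (p i) 1 :=
    (hp i).trans (smul_single_one _ _).symm
  have hc (i : ι) : c i ≠ 0 := fun hc => by simpa [hc] using hf₁ i
  refine ⟨p, c, fun i i' hpi => ?_, hc, hf₁⟩
  have h : f (c i' • single i 1) = f (c i • single i' 1) := by
    rw [map_smul, map_smul, hf₁, hf₁, hpi, smul_smul, smul_smul, mul_comm]
  rw [f.injective.eq_iff, smul_single_one, smul_single_one] at h
  exact (eq_and_eq_zero_or_eq_of_single_eq_single h).2.resolve_left (hc i')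

end Finsupp

section

variable {K : Type*} [Field K] [CharZero K]

theorem apply_eq_apply_zero_add_of_shift_or_eq_zero {p : ℤ → ℤ} (hp : Function.Injective p)
    {α β : K} (h : ∀ m n : ℤ, α + p n + m * β = 0 ∨ p (m + n) = m + p n) (n : ℤ) :
    p n = p 0 + n := by
  suffices hadd : ∀ m l, p (m + l) = m + p l by simpa [add_comm] using hadd n 0
  intro m l
  by_contra hne
  have hm : m ≠ 0 := by rintro rfl; simp at hne
  have h₁ : α + p l + m * β = 0 := (h m l).resolve_right hne
  have h₂ : α + p (m + l) + (-m : ℤ) * β = 0 :=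
    (h (-m) (m + l)).resolve_right (by rw [neg_add_cancel_left]; omega)
  push_cast at h₂
  rcases eq_or_ne β 0 with hβ | hβ
  · have : (p (m + l) : K) = p l := by subst hβ; linear_combination h₂ - h₁
    have := hp (Int.cast_injective this)
    omega
  · have hmβ : (m : K) * β ≠ 0 := mul_ne_zero (Int.cast_ne_zero.mpr hm) hβ
    have h₃ := (h (2 * m) l).resolve_left fun h₃ => hmβ <| by
      push_cast at h₃; linear_combination h₃ - h₁
    have h₄ := (h m (m + l)).resolve_left fun h₄ => hmβ (by linear_combination (h₄ - h₂) / 2)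
    rw [← add_assoc, ← two_mul] at h₄
    omega

theorem apply_zero_eq_zero_of_forall_mul_sub_mul {c : ℤ → K} {a β : K} (hβ : β ≠ 2)
    (h : ∀ m n : ℤ, c m * (a + m + n * β) - c n * (a + n + m * β) = (n - m) * c (m + n)) :
    c 0 = 0 := by
  have h₀ : ∀ m : ℤ, c m * (a + 2 * m) = c 0 * (a + m * β) := fun m => by
    linear_combination (by simpa using h m 0 : c m * (a + m) - c 0 * (a + m * β) = -m * c m)
  have h₁ := h₀ 1
  have h₁' := h₀ (-1)
  have h₂ := h₀ 2
  have h₃ := h₀ 3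
  have e₁ := h 1 (-1)
  have e₂ := h 1 2
  norm_num at h₁ h₁' h₂ h₃ e₁ e₂
  -- `e₁` times `(a + 2) (a - 2)`, with `c 1` and `c (-1)` eliminated through `h₁`, `h₁'`
  have hβ₁ : (β + 1) * c 0 = 0 := mul_left_cancel₀ (sub_ne_zero.mpr hβ) <| by
    linear_combination ((a+2)*(a-2)/4) * e₁ - ((a+1-β)*(a-2)/4) * h₁ + ((a-1+β)*(a+2)/4) * h₁'
  rcases mul_eq_zero.mp hβ₁ with hβ₁ | hc₀
  · obtain rfl : β = -1 := by linear_combination hβ₁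
    linear_combination ((a+2)*(a+4)*(a+6)/72) * e₂ - ((a-1)*(a+4)*(a+6)/72) * h₁
      + ((a+1)*(a+2)*(a+6)/72) * h₂ + ((a+2)*(a+4)/72) * h₃
  · exact hc₀

end

theorem stmt_13_general (φ : ℤ × ℤ → ℂ)
    (hE1 : ∀ m n : ℤ, φ (m, n) - φ (n, m) = (n : ℂ) - m)
    (α β : ℂ) (hβ : β ≠ 2)
    (σ τ : ℤ → ((ℤ →₀ ℂ) →ₗ[ℂ] (ℤ →₀ ℂ)))
    (hσ : ∀ m n : ℤ, σ m (W n) = (-φ (m, n)) • W (m + n))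
    (hτ : ∀ m i : ℤ, τ m (W i) = (α + i + m * β) • W (m + i)) :
    ¬ ∃ f : (ℤ →₀ ℂ) ≃ₗ[ℂ] (ℤ →₀ ℂ),
      ∀ (m : ℤ) (x : ℤ →₀ ℂ), f (σ m x) = τ m (f x) := by
  rintro ⟨f, hf⟩
  unfold W at hσ hτ
  obtain ⟨p, c, hp, hc, hfW⟩ := Finsupp.exists_injective_smul_single_of_intertwines_diagonal
    (d := fun n => -φ (0, n)) (g := fun i : ℤ => α + i) (fun n => by rw [hσ, zero_add])
    (fun i => by simpa using hτ 0 i) ((add_right_injective α).comp Int.cast_injective) f (hf 0)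
  have hcoeff (m n : ℤ) : c n * (α + p n + m * β) = -φ (m, n) * c (m + n) ∧
      (c n * (α + p n + m * β) = 0 ∨ m + p n = p (m + n)) := by
    have h := hf m (Finsupp.single n 1)
    rw [hσ, map_smul, hfW, hfW, map_smul, hτ] at h
    simp only [Finsupp.smul_single, smul_eq_mul, mul_one] at h
    exact Finsupp.eq_and_eq_zero_or_eq_of_single_eq_single h.symm
  have hlin := apply_eq_apply_zero_add_of_shift_or_eq_zero hp fun m n =>
    (hcoeff m n).2.imp (fun h => (mul_eq_zero.mp h).resolve_left (hc n)) Eq.symm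
  refine hc 0 (apply_zero_eq_zero_of_forall_mul_sub_mul (a := α + p 0) hβ fun m n => ?_)
  have hmn := (hcoeff m n).1
  have hnm := (hcoeff n m).1
  rw [hlin n] at hmn
  rw [hlin m, add_comm n m] at hnm
  push_cast at hmn hnm
  linear_combination hnm - hmn + c (m + n) * hE1 m n

theorem stmt_13 (φ : ℤ × ℤ → ℂ)
    (hE1 : ∀ m n : ℤ, φ (m, n) - φ (n, m) = (n : ℂ) - m)
    (hE2 : ∀ m n l : ℤ, ((n : ℂ) - m) * φ (m + n, l)
        = φ (m, l) * φ (n, m + l) - φ (n, l) * φ (m, n + l))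
    (α β : ℂ) (hα0 : 0 ≤ α.re) (hα1 : α.re < 1) (hβ : β ≠ 2)
    (σ τ : ℤ → ((ℤ →₀ ℂ) →ₗ[ℂ] (ℤ →₀ ℂ)))
    (hσ : ∀ m n : ℤ, σ m (W n) = (-φ (m, n)) • W (m + n))
    (hτ : ∀ m i : ℤ, τ m (W i) = (α + i + m * β) • W (m + i)) :
    ¬ ∃ f : (ℤ →₀ ℂ) ≃ₗ[ℂ] (ℤ →₀ ℂ),
      ∀ (m : ℤ) (x : ℤ →₀ ℂ), f (σ m x) = τ m (f x) :=
  stmt_13_general φ hE1 α β hβ σ τ hσ hτ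
end

section
/- Let φ : ℤ × ℤ → ℂ satisfy (E1) and (E2). Then there exists γ ∈ ℂ such that φ(n,m) = −(γ + m + 2n) for all m,n ∈ ℤ. (Equivalently: every graded anti-pre-Lie algebraic structure on the Witt algebra is of the form W_n ∘ W_m = −(γ + m + 2n)W_{m+n} for some γ ∈ ℂ.) -/
/-!
Write `c = φ (0, 0)`. Specialising (E2) to `m = 0` shows that wherever `φ (n, l) ≠ 0` the column
`φ (0, ·)` drops by exactly `n` from `l` to `n + l`; combined with (E1) at `(n, 0)` this leaves each
`φ (0, n)` only the two candidates `n` and `c - n`, and the candidate `n` would force a whole row of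
`φ` to vanish, which (E2) at `(-1, 1, n)` forbids. Knowing the column, (E2) at `(m, n, 0)` gives
`φ (n, m) = c - m - 2n` off the diagonal, and (E2) at `(m, n, n - m)` then pins down `φ (n, n)`.
-/

/-- The equations (E1) and (E2) on the structure constants of `W_m ∘ W_n = φ (m, n) W_{m+n}`. -/
structure IsWittAntiPreLie_s14 {K : Type*} [Field K] (φ : ℤ × ℤ → K) : Prop where
  sub_swap : ∀ m n : ℤ, φ (m, n) - φ (n, m) = (n : K) - m
  sub_mul : ∀ m n l : ℤ, ((n : K) - m) * φ (m + n, l)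
    = φ (m, l) * φ (n, m + l) - φ (n, l) * φ (m, n + l)

namespace IsWittAntiPreLie_s14

variable {K : Type*} [Field K] {φ : ℤ × ℤ → K}

theorem apply_mul_column_eq_zero (h : IsWittAntiPreLie_s14 φ) (n l : ℤ) :
    φ (n, l) * (φ (0, l) - φ (0, n + l) - n) = 0 := by
  have h0 := h.sub_mul 0 n l
  simp only [zero_add, Int.cast_zero, sub_zero] at h0
  linear_combination -h0

theorem apply_right_zero (h : IsWittAntiPreLie_s14 φ) (n : ℤ) : φ (n, 0) = φ (0, n) - n := by
  linear_combination (by simpa using h.sub_swap n 0 : φ (n, 0) - φ (0, n) = -n)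

theorem apply_zero_left_dichotomy (h : IsWittAntiPreLie_s14 φ) (n : ℤ) :
    (φ (0, n) - n) * (φ (0, 0) - φ (0, n) - n) = 0 := by
  have h0 := h.apply_mul_column_eq_zero n 0
  rw [add_zero, h.apply_right_zero] at h0
  exact h0

variable [CharZero K]

theorem apply_eq_zero_of_apply_zero_left_eq (h : IsWittAntiPreLie_s14 φ) {n : ℤ}
    (hn : φ (0, n) = n) (hc : φ (0, 0) ≠ 2 * n) {k : ℤ} (hk : k ≠ 0) : φ (k, n) = 0 := by
  refine (mul_eq_zero.1 (h.apply_mul_column_eq_zero k n)).resolve_right fun hcol => ?_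
  have hkn : φ (0, k + n) = n - k := by linear_combination -hcol + hn
  rcases mul_eq_zero.1 (h.apply_zero_left_dichotomy (k + n)) with h' | h'
  · apply hk
    exact_mod_cast (by push_cast at h'; linear_combination (h' - hkn) / (-2) : (k : K) = 0)
  · exact hc (by push_cast at h'; linear_combination h' + hkn)

theorem apply_zero_left (h : IsWittAntiPreLie_s14 φ) (n : ℤ) : φ (0, n) = φ (0, 0) - n := by
  by_contra hne
  have hn : φ (0, n) = n := by
    rcases mul_eq_zero.1 (h.apply_zero_left_dichotomy n) with h' | h'
    · linear_combination h'
    · exact absurd (by linear_combination -h') hne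
  have hc : φ (0, 0) ≠ 2 * n := fun hc => hne (by rw [hn, hc]; ring)
  -- (E2) at `(-1, 1, n)` expresses `2 φ (0, n)` through `φ (1, n)` and `φ (-1, n)`, both zero.
  have h2 := h.sub_mul (-1) 1 n
  norm_num [h.apply_eq_zero_of_apply_zero_left_eq hn hc one_ne_zero,
    h.apply_eq_zero_of_apply_zero_left_eq hn hc (by norm_num : (-1 : ℤ) ≠ 0), hn] at h2
  exact hne (by subst h2; simp)

theorem apply_of_ne_s14 (h : IsWittAntiPreLie_s14 φ) {n m : ℤ} (hnm : n ≠ m) :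
    φ (n, m) = φ (0, 0) - m - 2 * n := by
  have h0 := h.sub_mul m n 0
  rw [add_zero, add_zero, h.apply_right_zero, h.apply_right_zero, h.apply_right_zero,
    h.apply_zero_left m, h.apply_zero_left n, h.apply_zero_left (m + n)] at h0
  have hswap : φ (m, n) = φ (n, m) + (n - m) := by linear_combination h.sub_swap m n
  rw [hswap] at h0
  have hne : (n : K) - m ≠ 0 := sub_ne_zero.2 (by exact_mod_cast hnm)
  have key : ((n : K) - m) * (φ (n, m) - (φ (0, 0) - m - 2 * n)) = 0 := by
    push_cast at h0
    linear_combination -h0 / 2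
  exact sub_eq_zero.1 ((mul_eq_zero.1 key).resolve_left hne)

theorem apply_diag (h : IsWittAntiPreLie_s14 φ) (n : ℤ) : φ (n, n) = φ (0, 0) - 3 * n := by
  have off : ∀ a b : ℤ, a ≠ b → φ (a, b) = φ (0, 0) - b - 2 * a := fun _ _ => h.apply_of_ne_s14
  -- (E2) at `(m, n, n - m)` involves `φ (n, n)` and otherwise only off-diagonal values.
  have key : ∀ m : ℤ, m ≠ 0 → m ≠ n → 2 * m ≠ n →
      (φ (0, 0) - n - m) * (φ (n, n) - (φ (0, 0) - 3 * n)) = 0 := by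
    intro m hm0 hmn h2mn
    have h0 := h.sub_mul m n (n - m)
    rw [add_sub_cancel, off (m + n) (n - m) (by omega), off m (n - m) (by omega),
      off n (n - m) (by omega), off m (n + (n - m)) (by omega)] at h0
    push_cast at h0
    linear_combination -h0
  by_contra hne
  have hm : ∀ m : ℤ, m ≠ 0 → m ≠ n → 2 * m ≠ n → φ (0, 0) - n - m = 0 := fun m h1 h2 h3 =>
    (mul_eq_zero.1 (key m h1 h2 h3)).resolve_right (sub_ne_zero.2 hne)
  have h1 := hm (n.natAbs + 1) (by omega) (by omega) (by omega)
  have h2 := hm (n.natAbs + 2) (by omega) (by omega) (by omega)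
  push_cast at h1 h2
  exact one_ne_zero (by linear_combination h1 - h2 : (1 : K) = 0)

theorem apply_eq (h : IsWittAntiPreLie_s14 φ) (n m : ℤ) : φ (n, m) = φ (0, 0) - m - 2 * n := by
  rcases eq_or_ne n m with rfl | hnm
  · rw [h.apply_diag]; ring
  · exact h.apply_of_ne_s14 hnm

end IsWittAntiPreLie_s14

theorem stmt_14 (φ : ℤ × ℤ → ℂ)
    (hE1 : ∀ m n : ℤ, φ (m, n) - φ (n, m) = (n : ℂ) - m)
    (hE2 : ∀ m n l : ℤ, ((n : ℂ) - m) * φ (m + n, l)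
        = φ (m, l) * φ (n, m + l) - φ (n, l) * φ (m, n + l)) :
    ∃ γ : ℂ, ∀ m n : ℤ, φ (n, m) = -(γ + m + 2 * n) := by
  have h : IsWittAntiPreLie_s14 φ := ⟨hE1, hE2⟩
  exact ⟨-φ (0, 0), fun m n => by rw [h.apply_eq]; ring⟩
end

section
/- Let φ₁, φ₂ : ℤ × ℤ → ℂ each satisfy (E1) and (E2), and let S = ℤ →₀ ℂ with standard basis {W_m | m ∈ ℤ}. Let ∘ and • be the ℂ-bilinear operations on S determined by W_n ∘ W_m = φ₁(n,m)·W_{m+n} and W_n • W_m = φ₂(n,m)·W_{m+n}. Then there exists a ℂ-linear bijection T : S → S with T(x ∘ y) = T(x) • T(y) for all x,y ∈ S if and only if either φ₁(n,m) = φ₂(n,m) for all m,n ∈ ℤ, or φ₁(n,m) = −φ₂(−n,−m) for all m,n ∈ ℤ. -/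
section Classification

variable {φ : ℤ × ℤ → ℂ}
  (hE1 : ∀ m n : ℤ, φ (m, n) - φ (n, m) = (n : ℂ) - m)
  (hE2 : ∀ m n l : ℤ, ((n : ℂ) - m) * φ (m + n, l)
    = φ (m, l) * φ (n, m + l) - φ (n, l) * φ (m, n + l))

include hE2 in
lemma phi_mul_phi_zero_eq_zero (n l : ℤ) :
    φ (n, l) * (φ (0, n + l) + n - φ (0, l)) = 0 := by
  have h := hE2 0 n l
  simp only [Int.cast_zero, zero_add, sub_zero] at h
  linear_combination h

include hE1 hE2

lemma phi_zero_eq_of_ne {s : ℤ} (hs : φ (0, s) ≠ φ (0, 0) - s) :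
    φ (0, 0) = -s ∧ φ (0, s) = s := by
  have hs0 : (s : ℂ) ≠ 0 := fun h => hs (by rw [h, sub_zero, Int.cast_eq_zero.mp h])
  have h1 : φ (s, 0) = 0 := by
    have h := phi_mul_phi_zero_eq_zero hE2 s 0
    rw [add_zero] at h
    exact (mul_eq_zero.mp h).resolve_right fun h' => hs (by linear_combination h')
  have h2 : φ (0, s) = s := by linear_combination hE1 0 s + h1
  have h3 : φ (-s, s) = 0 := by
    have h := phi_mul_phi_zero_eq_zero hE2 (-s) s
    rw [neg_add_cancel, h2] at h
    refine (mul_eq_zero.mp h).resolve_right fun h' => hs ?_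
    push_cast at h'
    linear_combination h2 - h'
  have h4 : φ (s, -s) = -2 * s := by
    have h := hE1 (-s) s
    push_cast at h
    linear_combination -h + h3
  have h5 : φ (0, -s) = φ (0, 0) + s := by
    have h := phi_mul_phi_zero_eq_zero hE2 s (-s)
    rw [add_neg_cancel, h4] at h
    have h' := (mul_eq_zero.mp h).resolve_left (by simpa using hs0)
    linear_combination -h'
  have h6 : φ (-s, 0) = φ (0, 0) + 2 * s := by
    have h := hE1 0 (-s)
    push_cast at h
    linear_combination -h + h5
  have h7 := hE2 s (-s) 0
  simp only [add_neg_cancel, add_zero] at h7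
  rw [h1, h3, h4, h6] at h7
  refine ⟨?_, h2⟩
  have h8 : (4 * s : ℂ) * (φ (0, 0) + s) = 0 := by push_cast at h7; linear_combination -h7
  linear_combination (mul_eq_zero.mp h8).resolve_left (by simpa using hs0)

lemma phi_zero_apply (l : ℤ) : φ (0, l) = φ (0, 0) - l := by
  by_contra hs
  obtain ⟨hc, hs'⟩ := phi_zero_eq_of_ne hE1 hE2 hs
  have hl : l ≠ 0 := by rintro rfl; simp at hs
  have hs0 : (l : ℂ) ≠ 0 := by exact_mod_cast hl
  have hgood : ∀ t : ℤ, t ≠ l → φ (0, t) = φ (0, 0) - t := by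
    intro t ht
    by_contra h
    exact ht (by exact_mod_cast neg_injective ((phi_zero_eq_of_ne hE1 hE2 h).1.symm.trans hc))
  -- the only bad index `l` would force `φ (3l, -2l) = φ (-2l, 3l) = 0`, against (E1)
  have h3 : φ (3 * l, -2 * l) = 0 := by
    have h := phi_mul_phi_zero_eq_zero hE2 (3 * l) (-2 * l)
    rw [show 3 * l + -2 * l = l by ring, hs', hgood _ (by omega)] at h
    refine (mul_eq_zero.mp h).resolve_right fun h' => hs0 ?_
    push_cast at h'
    linear_combination (h' + hc) / 3
  have h2 : φ (-2 * l, 3 * l) = 0 := by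
    have h := phi_mul_phi_zero_eq_zero hE2 (-2 * l) (3 * l)
    rw [show -2 * l + 3 * l = l by ring, hs', hgood _ (by omega)] at h
    refine (mul_eq_zero.mp h).resolve_right fun h' => hs0 ?_
    push_cast at h'
    linear_combination (h' + hc) / 3
  have h := hE1 (3 * l) (-2 * l)
  rw [h3, h2] at h
  push_cast at h
  exact hs0 (by linear_combination h / 5)

lemma phi_apply (n m : ℤ) : φ (n, m) = φ (0, 0) - m - 2 * n := by
  set c := φ (0, 0)
  have zero_row := phi_zero_apply hE1 hE2
  have zero_col : ∀ l : ℤ, φ (l, 0) = c - 2 * l := fun l => by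
    linear_combination hE1 l 0 + zero_row l
  have off_diag : ∀ n m : ℤ, n ≠ m → φ (n, m) = c - m - 2 * n := by
    intro n m hnm
    have h := hE2 m n 0
    simp only [add_zero] at h
    rw [zero_col, zero_col, zero_col] at h
    have hne : (n : ℂ) - m ≠ 0 := sub_ne_zero.mpr (by exact_mod_cast hnm)
    have key : ((n : ℂ) - m) * (φ (n, m) - (c - m - 2 * n)) = 0 := by
      push_cast at h
      linear_combination -h / 2 + (c - 2 * n) / 2 * hE1 m n
    linear_combination (mul_eq_zero.mp key).resolve_left hne
  rcases ne_or_eq n m with hnm | rfl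
  · exact off_diag n m hnm
  rcases eq_or_ne n 0 with rfl | hn
  · simp [c]
  -- on the diagonal, (E2) at `(2n, -n, n)` involves `φ (n, n)` and off-diagonal values only
  have h := hE2 (2 * n) (-n) n
  rw [show 2 * n + -n = n by ring, show 2 * n + n = 3 * n by ring, neg_add_cancel, zero_col,
    off_diag (2 * n) n (by omega), off_diag (-n) (3 * n) (by omega),
    off_diag (-n) n (by omega)] at h
  have hn' : (n : ℂ) ≠ 0 := by exact_mod_cast hn
  have key : (n : ℂ) * (φ (n, n) - (c - n - 2 * n)) = 0 := by
    push_cast at h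
    linear_combination -h / 3
  linear_combination (mul_eq_zero.mp key).resolve_left hn'

end Classification

open Finsupp

lemma single_eq_smul_W (a : ℤ) (b : ℂ) : single a b = b • W a := by
  rw [W, smul_single_one]

lemma W_apply (m i : ℤ) : W m i = if m = i then 1 else 0 := single_apply

lemma mem_of_forall_apply_W_mem {M : Type*} [AddCommGroup M] [Module ℂ M]
    {T : (ℤ →₀ ℂ) →ₗ[ℂ] M} (hT : Function.Surjective T) {p : Submodule ℂ M}
    (h : ∀ m, T (W m) ∈ p) (y : M) : y ∈ p := by
  obtain ⟨x, rfl⟩ := hT y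
  induction x using Finsupp.induction_linear with
  | zero => simp
  | add f g hf hg => simpa using p.add_mem hf hg
  | single a b => simpa [single_eq_smul_W] using p.smul_mem b (h a)

lemma eq_one_or_eq_neg_one_of_apply_W_ne_zero (T : (ℤ →₀ ℂ) ≃ₗ[ℂ] (ℤ →₀ ℂ)) {a : ℂ}
    (h : ∀ m i, T (W m) i ≠ 0 → a * i = m) : a = 1 ∨ a = -1 := by
  obtain ⟨n, rfl⟩ : ∃ n : ℤ, a = n := by
    have h1 := mem_of_forall_apply_W_mem (T := T.toLinearMap) T.surjective
      (p := supported ℂ ℂ {i | ∃ n : ℤ, a * i = n})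
      (fun m => (mem_supported ℂ _).mpr fun i hi => ⟨m, h m i (mem_support_iff.mp hi)⟩) (W 1)
    rw [mem_supported] at h1
    simpa using h1 (show (1 : ℤ) ∈ (W 1).support by simp [W])
  obtain ⟨k, hk⟩ : ∃ i, T (W 1) i ≠ 0 := by
    simpa using DFunLike.ne_iff.mp (T.map_ne_zero_iff.mpr (by simp [W] : W 1 ≠ 0))
  have hnk : n * k = 1 := by exact_mod_cast h 1 k hk
  rcases Int.eq_one_or_neg_one_of_mul_eq_one hnk with rfl | rfl <;> simp

-- a point of the support beyond `k` would propagate forever in steps of `k`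
lemma mem_supported_of_eigen {z : ℤ →₀ ℂ} {a b m : ℂ} {k : ℤ} (hb : b ≠ 0) (hk : k ≠ 0)
    (h : ∀ i, a * i * z i + b * (i - 2 * k) * z (i - k) = m * z i) :
    z ∈ supported ℂ ℂ {i | (i - k) * k ≤ 0} := by
  rw [mem_supported]
  intro i₀ hi₀
  by_contra hfar
  simp only [Set.mem_ofPred_eq, not_le] at hfar
  have hstep : ∀ j : ℤ, z j ≠ 0 → 0 < (j - k) * k → z (j + k) ≠ 0 := by
    intro j hj hjk hz
    have h' := h (j + k)
    rw [hz, add_sub_cancel_right] at h'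
    have hjk' : (j : ℂ) - k ≠ 0 := by
      exact_mod_cast sub_ne_zero.mpr fun e => by subst e; simp at hjk
    apply mul_ne_zero (mul_ne_zero hb hjk') hj
    push_cast at h'
    linear_combination h'
  have hrun : ∀ n : ℕ, i₀ + n * k ∈ z.support := by
    intro n
    induction n with
    | zero => simpa using hi₀
    | succ n ih =>
      rw [mem_support_iff] at ih ⊢
      have := hstep _ ih (by nlinarith [mul_self_pos.mpr hk])
      push_cast
      rwa [add_one_mul, ← add_assoc]
  have hinj : Function.Injective fun n : ℕ => i₀ + n * k := by
    intro n n' e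
    simpa [hk] using e
  exact (Set.infinite_range_of_injective hinj) (z.support.finite_toSet.subset
    (Set.range_subset_iff.mpr hrun))

section Coefficients

variable {φ : ℤ × ℤ → ℂ} {mul : (ℤ →₀ ℂ) →ₗ[ℂ] (ℤ →₀ ℂ) →ₗ[ℂ] (ℤ →₀ ℂ)}
  (hmul : ∀ n m : ℤ, mul (W n) (W m) = φ (n, m) • W (m + n))
include hmul

lemma mul_W_apply (x : ℤ →₀ ℂ) (k i : ℤ) : mul x (W k) i = φ (i - k, k) * x (i - k) := by
  induction x using Finsupp.induction_linear with
  | zero => simp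
  | add f g hf hg => simp [hf, hg, mul_add]
  | single a b =>
    simp only [single_eq_smul_W, map_smul, LinearMap.smul_apply, hmul, Finsupp.smul_apply,
      W_apply, smul_eq_mul]
    by_cases ha : a = i - k
    · simp [ha, mul_comm]
    · simp [ha, show k + a ≠ i by omega]

lemma W_mul_apply (x : ℤ →₀ ℂ) (k i : ℤ) : mul (W k) x i = φ (k, i - k) * x (i - k) := by
  induction x using Finsupp.induction_linear with
  | zero => simp
  | add f g hf hg => simp [hf, hg, mul_add]
  | single a b =>
    simp only [single_eq_smul_W, map_smul, hmul, Finsupp.smul_apply, W_apply, smul_eq_mul]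
    by_cases ha : a = i - k
    · simp [ha, mul_comm]
    · simp [ha, show a + k ≠ i by omega]

variable {c : ℂ} (hφ : ∀ n m : ℤ, φ (n, m) = c - m - 2 * n)
include hφ

lemma two_smul_W_zero_mul_sub (y : ℤ →₀ ℂ) :
    (2 : ℂ) • mul (W 0) y - mul y (W 0) = c • y := by
  ext i
  simp only [Finsupp.sub_apply, Finsupp.smul_apply, smul_eq_mul, mul_W_apply hmul,
    W_mul_apply hmul, hφ, sub_zero]
  push_cast
  ring

lemma two_smul_mul_W_zero_sub_apply (u : ℤ →₀ ℂ) (j : ℤ) :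
    ((2 : ℂ) • mul u (W 0) - mul (W 0) u) j = (c - 3 * j) * u j := by
  simp only [Finsupp.sub_apply, Finsupp.smul_apply, smul_eq_mul, mul_W_apply hmul,
    W_mul_apply hmul, hφ, sub_zero]
  push_cast
  ring

lemma commutator_smul_W_zero_add_smul_W_apply (a b : ℂ) (k : ℤ) (z : ℤ →₀ ℂ) (i : ℤ) :
    (mul (a • W 0 + b • W k) z - mul z (a • W 0 + b • W k)) i
      = a * i * z i + b * (i - 2 * k) * z (i - k) := by
  simp only [map_add, map_smul, LinearMap.add_apply, LinearMap.smul_apply, Finsupp.sub_apply,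
    Finsupp.add_apply, Finsupp.smul_apply, smul_eq_mul, mul_W_apply hmul, W_mul_apply hmul, hφ,
    sub_zero]
  push_cast
  ring

lemma W_zero_mul_W_sub (m : ℤ) : mul (W 0) (W m) - mul (W m) (W 0) = (m : ℂ) • W m := by
  rw [hmul, hmul, add_zero, zero_add, ← sub_smul, hφ, hφ]
  push_cast
  ring_nf

end Coefficients

lemma eq_smul_W_zero_add_smul_W {u : ℤ →₀ ℂ} {c : ℂ} (h : ∀ j ≠ 0, (c - 3 * j) * u j = 0) :
    ∃ k ≠ 0, u = u 0 • W 0 + u k • W k := by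
  by_cases hk : ∃ k ≠ 0, u k ≠ 0
  · obtain ⟨k, hk0, hku⟩ := hk
    have hc : c = 3 * k := by linear_combination (mul_eq_zero.mp (h k hk0)).resolve_right hku
    refine ⟨k, hk0, Finsupp.ext fun j => ?_⟩
    simp only [Finsupp.add_apply, Finsupp.smul_apply, W_apply, smul_eq_mul]
    by_cases hj0 : j = 0
    · simp [hj0, hk0]
    by_cases hjk : j = k
    · simp [hjk, Ne.symm hk0]
    have hcj : c - 3 * j ≠ 0 := by
      rw [hc]; intro e; exact hjk (by exact_mod_cast (by linear_combination -e / 3 : (j : ℂ) = k))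
    simp [Ne.symm hj0, Ne.symm hjk, (mul_eq_zero.mp (h j hj0)).resolve_left hcj]
  · push Not at hk
    refine ⟨1, one_ne_zero, Finsupp.ext fun j => ?_⟩
    simp only [Finsupp.add_apply, Finsupp.smul_apply, W_apply, smul_eq_mul]
    by_cases hj0 : j = 0
    · simp [hj0]
    · simp [Ne.symm hj0, hk j hj0, hk 1 one_ne_zero]

section Isomorphism

variable {φ₁ φ₂ : ℤ × ℤ → ℂ} {c₁ c₂ : ℂ} {mul₁ mul₂ : (ℤ →₀ ℂ) →ₗ[ℂ] (ℤ →₀ ℂ) →ₗ[ℂ] (ℤ →₀ ℂ)}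

theorem eq_or_eq_neg_of_linearEquiv
    (hmul₁ : ∀ n m : ℤ, mul₁ (W n) (W m) = φ₁ (n, m) • W (m + n))
    (hmul₂ : ∀ n m : ℤ, mul₂ (W n) (W m) = φ₂ (n, m) • W (m + n))
    (hφ₁ : ∀ n m : ℤ, φ₁ (n, m) = c₁ - m - 2 * n) (hφ₂ : ∀ n m : ℤ, φ₂ (n, m) = c₂ - m - 2 * n)
    (T : (ℤ →₀ ℂ) ≃ₗ[ℂ] (ℤ →₀ ℂ)) (hT : ∀ x y, T (mul₁ x y) = mul₂ (T x) (T y)) :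
    c₁ = c₂ ∨ c₁ = -c₂ := by
  set u := T (W 0)
  have hu : ∀ j, (c₂ - 3 * j) * u j = if j = 0 then c₁ else 0 := by
    intro j
    have h := congrArg T (two_smul_W_zero_mul_sub hmul₁ hφ₁ (T.symm (W 0)))
    rw [map_sub, map_smul, map_smul, hT, hT, T.apply_symm_apply] at h
    rw [← two_smul_mul_W_zero_sub_apply hmul₂ hφ₂, h, Finsupp.smul_apply, W_apply]
    by_cases hj : j = 0
    · simp [hj]
    · simp [hj, Ne.symm hj]
  obtain ⟨k, hk, hu_eq⟩ := eq_smul_W_zero_add_smul_W (c := c₂) fun j hj => by simpa [hj] using hu j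
  have heigen : ∀ m i, u 0 * i * T (W m) i + u k * (i - 2 * k) * T (W m) (i - k)
      = m * T (W m) i := by
    intro m i
    have h := congrArg (· i) (congrArg T (W_zero_mul_W_sub hmul₁ hφ₁ m))
    simp only [map_sub, map_smul, hT] at h
    rw [← commutator_smul_W_zero_add_smul_W_apply hmul₂ hφ₂, ← hu_eq]
    simpa using h
  by_cases hb : u k = 0
  · have hspec : ∀ m i, T (W m) i ≠ 0 → u 0 * i = m := by
      intro m i hi
      have h := heigen m i
      rw [hb] at h
      exact sub_eq_zero.mp ((mul_eq_zero.mp (by linear_combination h :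
        (u 0 * i - m) * T (W m) i = 0)).resolve_right hi)
    have hc₁ : c₁ = u 0 * c₂ := by simpa [mul_comm] using (hu 0).symm
    rcases eq_one_or_eq_neg_one_of_apply_W_ne_zero T hspec with h | h
    · left; simpa [h] using hc₁
    · right; simpa [h] using hc₁
  · -- the image of `T` would miss `W (2 * k)`
    have h := mem_of_forall_apply_W_mem (T := T.toLinearMap) T.surjective
      (fun m => mem_supported_of_eigen hb hk (heigen m)) (W (2 * k))
    rw [mem_supported] at h
    have h2k := h (show 2 * k ∈ (W (2 * k)).support by simp [W])
    simp only [Set.mem_ofPred_eq] at h2k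
    nlinarith [mul_self_pos.mpr hk]

end Isomorphism

lemma map_mul_of_map_W_mul_W {mul₁ mul₂ : (ℤ →₀ ℂ) →ₗ[ℂ] (ℤ →₀ ℂ) →ₗ[ℂ] (ℤ →₀ ℂ)}
    (T : (ℤ →₀ ℂ) →ₗ[ℂ] (ℤ →₀ ℂ)) (h : ∀ n m, T (mul₁ (W n) (W m)) = mul₂ (T (W n)) (T (W m)))
    (x y : ℤ →₀ ℂ) : T (mul₁ x y) = mul₂ (T x) (T y) := by
  have : mul₁.compr₂ T = mul₂.compl₁₂ T T := by
    ext n m : 4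
    exact h n m
  exact LinearMap.congr_fun₂ this x y

noncomputable def negReindex : (ℤ →₀ ℂ) ≃ₗ[ℂ] (ℤ →₀ ℂ) :=
  (Finsupp.domLCongr (Equiv.neg ℤ)).trans (LinearEquiv.neg ℂ)

lemma negReindex_W (m : ℤ) : negReindex (W m) = -W (-m) := by
  simp [negReindex, W]

theorem stmt_16 (φ₁ φ₂ : ℤ × ℤ → ℂ)
    (hE1₁ : ∀ m n : ℤ, φ₁ (m, n) - φ₁ (n, m) = (n : ℂ) - m)
    (hE2₁ : ∀ m n l : ℤ, ((n : ℂ) - m) * φ₁ (m + n, l)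
        = φ₁ (m, l) * φ₁ (n, m + l) - φ₁ (n, l) * φ₁ (m, n + l))
    (hE1₂ : ∀ m n : ℤ, φ₂ (m, n) - φ₂ (n, m) = (n : ℂ) - m)
    (hE2₂ : ∀ m n l : ℤ, ((n : ℂ) - m) * φ₂ (m + n, l)
        = φ₂ (m, l) * φ₂ (n, m + l) - φ₂ (n, l) * φ₂ (m, n + l))
    (mul₁ mul₂ : (ℤ →₀ ℂ) →ₗ[ℂ] (ℤ →₀ ℂ) →ₗ[ℂ] (ℤ →₀ ℂ))
    (h₁ : ∀ n m : ℤ, mul₁ (W n) (W m) = φ₁ (n, m) • W (m + n))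
    (h₂ : ∀ n m : ℤ, mul₂ (W n) (W m) = φ₂ (n, m) • W (m + n)) :
    (∃ T : (ℤ →₀ ℂ) ≃ₗ[ℂ] (ℤ →₀ ℂ),
        ∀ x y : ℤ →₀ ℂ, T (mul₁ x y) = mul₂ (T x) (T y)) ↔
    ((∀ n m : ℤ, φ₁ (n, m) = φ₂ (n, m)) ∨
     (∀ n m : ℤ, φ₁ (n, m) = -φ₂ (-n, -m))) := by
  have hφ₁ := phi_apply hE1₁ hE2₁
  have hφ₂ := phi_apply hE1₂ hE2₂
  constructor
  · rintro ⟨T, hT⟩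
    rcases eq_or_eq_neg_of_linearEquiv h₁ h₂ hφ₁ hφ₂ T hT with h | h
    · exact Or.inl fun n m => by rw [hφ₁, hφ₂, h]
    · exact Or.inr fun n m => by rw [hφ₁, hφ₂, h]; push_cast; ring
  · rintro (h | h)
    · exact ⟨LinearEquiv.refl ℂ _, map_mul_of_map_W_mul_W LinearMap.id fun n m => by
        simp [h₁, h₂, h]⟩
    · exact ⟨negReindex, map_mul_of_map_W_mul_W negReindex.toLinearMap fun n m => by
        simp [negReindex_W, h₁, h₂, h, add_comm]⟩
end

section
/- Let γ₁, γ₂ ∈ ℂ and let S = ℤ →₀ ℂ with standard basis {W_m | m ∈ ℤ}. Let ∘₁ and ∘₂ be the ℂ-bilinear operations on S determined by W_n ∘₁ W_m = −(γ₁ + m + 2n)·W_{m+n} and W_n ∘₂ W_m = −(γ₂ + m + 2n)·W_{m+n}. Then there exists a ℂ-linear bijection T : S → S with T(x ∘₁ y) = T(x) ∘₂ T(y) for all x,y ∈ S if and only if γ₁ = γ₂ or γ₁ = −γ₂. -/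
open Finsupp

theorem exists_apply_single_apply_ne_zero {ι R : Type*} [Semiring R] [Nontrivial R]
    {T : (ι →₀ R) →ₗ[R] (ι →₀ R)} (hT : Function.Surjective T) (q : ι) :
    ∃ m, T (single m 1) q ≠ 0 := by
  by_contra! h
  have hzero : (lapply q).comp T = 0 :=
    Finsupp.basisSingleOne.ext fun m => by simpa using h m
  obtain ⟨x, hx⟩ := hT (single q 1)
  simpa [hx] using LinearMap.congr_fun hzero x

variable {F : Type*} [Field F]

def IsWittBracket (B : (ℤ →₀ F) →ₗ[F] (ℤ →₀ F) →ₗ[F] (ℤ →₀ F)) : Prop :=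
  ∀ n m : ℤ, B (single n 1) (single m 1) = ((m : F) - n) • single (m + n) 1

namespace IsWittBracket

variable {B : (ℤ →₀ F) →ₗ[F] (ℤ →₀ F) →ₗ[F] (ℤ →₀ F)}

theorem apply_add_apply (hB : IsWittBracket B) {u v : ℤ →₀ F} {K J : ℤ}
    (huniq : ∀ k ∈ u.support, ∀ j ∈ v.support, k + j = K + J → k = K ∧ j = J) :
    B u v (K + J) = u K * v J * ((J : F) - K) := by
  rw [← LinearMap.sum_repr_mul_repr_mul Finsupp.basisSingleOne Finsupp.basisSingleOne u v]
  simp only [basisSingleOne_repr, LinearEquiv.refl_apply, coe_basisSingleOne, hB _ _, smul_smul,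
    Finsupp.sum, finsetSum_apply, Finsupp.smul_apply, smul_eq_mul, single_apply]
  rw [Finset.sum_eq_single K, Finset.sum_eq_single J]
  · simp [add_comm J K, mul_assoc]
  · intro j _ hjJ
    rw [if_neg (by omega), mul_zero]
  · intro hJ
    simp [notMem_support_iff.mp hJ]
  · intro k hk hkK
    refine Finset.sum_eq_zero fun j hj => ?_
    rw [if_neg fun h => hkK (huniq k hk j hj (by omega)).1, mul_zero]
  · intro hK
    simp [notMem_support_iff.mp hK]

theorem apply_single_zero_apply (hB : IsWittBracket B) (v : ℤ →₀ F) (p : ℤ) :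
    B (single 0 1) v p = p * v p := by
  have huniq : ∀ k ∈ (single 0 (1 : F)).support, ∀ j ∈ v.support,
      k + j = 0 + p → k = 0 ∧ j = p := by
    intro k hk j _ hkj
    have := Finset.mem_singleton.mp (support_single_subset hk)
    omega
  simpa [mul_comm] using hB.apply_add_apply huniq

theorem eq_of_apply_eq_smul [CharZero F] (hB : IsWittBracket B) {u v : ℤ →₀ F} {μ : F}
    (huv : B u v = μ • v) {K J : ℤ} (hK : u K ≠ 0) (hJ : v J ≠ 0) (hKJ : v (K + J) = 0)
    (huniq : ∀ k ∈ u.support, ∀ j ∈ v.support, k + j = K + J → k = K ∧ j = J) : J = K := by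
  have h := hB.apply_add_apply huniq
  rw [huv, Finsupp.smul_apply, hKJ, smul_zero, eq_comm] at h
  have : (J : F) - K = 0 := (mul_eq_zero.mp h).resolve_left (mul_ne_zero hK hJ)
  exact_mod_cast sub_eq_zero.mp this

theorem le_of_apply_eq_smul [CharZero F] (hB : IsWittBracket B) {u v : ℤ →₀ F} {μ : F}
    (huv : B u v = μ • v) (hv : v ≠ 0) {K : ℤ} (hK : u K ≠ 0) (hKpos : 0 < K)
    (htop : ∀ k ∈ u.support, k ≤ K) : ∀ j ∈ v.support, j ≤ K := by
  have hs : v.support.Nonempty := support_nonempty_iff.mpr hv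
  have hJK : v.support.max' hs = K := by
    refine hB.eq_of_apply_eq_smul huv hK (mem_support_iff.mp (v.support.max'_mem hs)) ?_ ?_
    · exact notMem_support_iff.mp fun h => by have := v.support.le_max' _ h; omega
    · intro k hk j hj _
      have := htop k hk
      have := v.support.le_max' j hj
      omega
  exact fun j hj => hJK ▸ v.support.le_max' j hj

theorem ge_of_apply_eq_smul [CharZero F] (hB : IsWittBracket B) {u v : ℤ →₀ F} {μ : F}
    (huv : B u v = μ • v) (hv : v ≠ 0) {K : ℤ} (hK : u K ≠ 0) (hKneg : K < 0)
    (hbot : ∀ k ∈ u.support, K ≤ k) : ∀ j ∈ v.support, K ≤ j := by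
  have hs : v.support.Nonempty := support_nonempty_iff.mpr hv
  have hJK : v.support.min' hs = K := by
    refine hB.eq_of_apply_eq_smul huv hK (mem_support_iff.mp (v.support.min'_mem hs)) ?_ ?_
    · exact notMem_support_iff.mp fun h => by have := v.support.min'_le _ h; omega
    · intro k hk j hj _
      have := hbot k hk
      have := v.support.min'_le j hj
      omega
  exact fun j hj => hJK ▸ v.support.min'_le j hj

theorem support_subset_zero_of_eigenvectors [CharZero F] (hB : IsWittBracket B) {u : ℤ →₀ F}
    (e : ℤ → ℤ →₀ F) (μ : ℤ → F) (he : ∀ m, e m ≠ 0) (hu : ∀ m, B u (e m) = μ m • e m)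
    (hspan : ∀ q, ∃ m, e m q ≠ 0) : u.support ⊆ {0} := by
  intro k hk
  rw [Finset.mem_singleton]
  by_contra hk0
  rcases lt_or_gt_of_ne hk0 with hneg | hpos
  · have hKneg : u.support.min' ⟨k, hk⟩ < 0 := (u.support.min'_le k hk).trans_lt hneg
    obtain ⟨m, hm⟩ := hspan (u.support.min' ⟨k, hk⟩ - 1)
    have := hB.ge_of_apply_eq_smul (hu m) (he m) (mem_support_iff.mp (u.support.min'_mem _))
      hKneg u.support.min'_le _ (mem_support_iff.mpr hm)
    omega
  · have hKpos : 0 < u.support.max' ⟨k, hk⟩ := hpos.trans_le (u.support.le_max' k hk)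
    obtain ⟨m, hm⟩ := hspan (u.support.max' ⟨k, hk⟩ + 1)
    have := hB.le_of_apply_eq_smul (hu m) (he m) (mem_support_iff.mp (u.support.max'_mem _))
      hKpos u.support.le_max' _ (mem_support_iff.mpr hm)
    omega

theorem map_single_zero [CharZero F] {B' : (ℤ →₀ F) →ₗ[F] (ℤ →₀ F) →ₗ[F] (ℤ →₀ F)}
    (hB : IsWittBracket B) (hB' : IsWittBracket B') (T : (ℤ →₀ F) ≃ₗ[F] (ℤ →₀ F))
    (hT : ∀ x y, T (B x y) = B' (T x) (T y)) :
    T (single 0 1) = single 0 1 ∨ T (single 0 1) = -single 0 1 := by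
  set e : ℤ → ℤ →₀ F := fun m => T (single m 1)
  have he : ∀ m, e m ≠ 0 := fun m => by simp [e]
  have heigen : ∀ m : ℤ, B' (e 0) (e m) = (m : F) • e m := fun m => by
    simp only [e, ← hT, hB 0 m, map_smul, add_zero, Int.cast_zero, sub_zero]
  have hspan : ∀ q, ∃ m, e m q ≠ 0 :=
    exists_apply_single_apply_ne_zero (T := T.toLinearMap) T.surjective
  obtain ⟨c, hc⟩ :=
    support_subset_singleton'.mp (hB'.support_subset_zero_of_eigenvectors e _ he heigen hspan)
  have hcoef : ∀ m p, e m p ≠ 0 → c * p = m := by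
    intro m p hp
    have h := congr($(heigen m) p)
    rw [hc, ← smul_single_one, map_smul, LinearMap.smul_apply, Finsupp.smul_apply,
      hB'.apply_single_zero_apply, Finsupp.smul_apply, smul_eq_mul, smul_eq_mul, ← mul_assoc] at h
    exact mul_right_cancel₀ hp h
  obtain ⟨p, hp⟩ := Finsupp.ne_iff.mp (he 1)
  obtain ⟨m, hm⟩ := hspan 1
  have hcm : c = m := by simpa using hcoef m 1 hm
  have hcp : c * p = 1 := by simpa using hcoef 1 p hp
  have hmp : m * p = 1 := by
    rw [hcm] at hcp
    exact_mod_cast hcp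
  rcases Int.eq_one_or_neg_one_of_mul_eq_one hmp with rfl | rfl
  · left
    change e 0 = _
    rw [hc, hcm, Int.cast_one]
  · right
    change e 0 = _
    rw [hc, hcm, ← single_neg, Int.cast_neg, Int.cast_one]

end IsWittBracket

def IsAntiPreLieWitt (γ : F) (mul : (ℤ →₀ F) →ₗ[F] (ℤ →₀ F) →ₗ[F] (ℤ →₀ F)) : Prop :=
  ∀ n m : ℤ, mul (single n 1) (single m 1) = (-(γ + m + 2 * n)) • single (m + n) 1

noncomputable def reflect : (ℤ →₀ F) ≃ₗ[F] (ℤ →₀ F) :=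
  (Finsupp.domLCongr (Equiv.neg ℤ)).trans (LinearEquiv.neg F)

theorem reflect_single (m : ℤ) (a : F) : reflect (single m a) = single (-m) (-a) := by
  simp [reflect]

namespace IsAntiPreLieWitt

variable {γ γ₁ γ₂ : F} {mul mul₁ mul₂ : (ℤ →₀ F) →ₗ[F] (ℤ →₀ F) →ₗ[F] (ℤ →₀ F)}

-- Written with `(-1) •` since instance search finds no `Sub` on these bilinear maps.
theorem isWittBracket_commutator (h : IsAntiPreLieWitt γ mul) :
    IsWittBracket (mul + (-1 : F) • mul.flip) := by
  intro n m
  simp only [LinearMap.add_apply, LinearMap.smul_apply, LinearMap.flip_apply, h n m, h m n,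
    add_comm n m, smul_smul, ← add_smul]
  congr 1
  ring

theorem unique (h₁ : IsAntiPreLieWitt γ mul₁) (h₂ : IsAntiPreLieWitt γ mul₂) : mul₁ = mul₂ :=
  LinearMap.ext_basis Finsupp.basisSingleOne Finsupp.basisSingleOne fun n m => by
    simp only [coe_basisSingleOne, h₁ n m, h₂ n m]

theorem reflect_mul (h₁ : IsAntiPreLieWitt (-γ) mul₁) (h₂ : IsAntiPreLieWitt γ mul₂)
    (x y : ℤ →₀ F) : reflect (mul₁ x y) = mul₂ (reflect x) (reflect y) := by
  have : mul₁.compr₂ reflect.toLinearMap = mul₂.compl₁₂ reflect.toLinearMap reflect.toLinearMap :=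
    LinearMap.ext_basis Finsupp.basisSingleOne Finsupp.basisSingleOne fun n m => by
      simp only [LinearMap.compr₂_apply, LinearMap.compl₁₂_apply, LinearEquiv.coe_coe,
        coe_basisSingleOne, h₁ n m, LinearEquiv.map_smul, reflect_single, single_neg, map_neg,
        LinearMap.neg_apply, neg_neg, h₂ (-n) (-m), smul_neg, ← neg_smul]
      rw [neg_add]
      congr 1
      push_cast
      ring
  exact LinearMap.congr_fun₂ this x y

theorem eq_or_eq_neg_of_linearEquiv [CharZero F] (h₁ : IsAntiPreLieWitt γ₁ mul₁)
    (h₂ : IsAntiPreLieWitt γ₂ mul₂) (T : (ℤ →₀ F) ≃ₗ[F] (ℤ →₀ F))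
    (hT : ∀ x y, T (mul₁ x y) = mul₂ (T x) (T y)) : γ₁ = γ₂ ∨ γ₁ = -γ₂ := by
  have hTB : ∀ x y, T ((mul₁ + (-1 : F) • mul₁.flip) x y) =
      (mul₂ + (-1 : F) • mul₂.flip) (T x) (T y) := by
    simp [hT]
  have h := congr($(hT (single 0 1) (single 0 1)) 0)
  simp only [h₁ 0 0, add_zero, Int.cast_zero, mul_zero, map_smul] at h
  rcases h₁.isWittBracket_commutator.map_single_zero h₂.isWittBracket_commutator T hTB with h0 | h0
  · left
    simpa [h0, h₂ 0 0] using h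
  · right
    simpa [h0, h₂ 0 0] using h

end IsAntiPreLieWitt

theorem stmt_17 (γ₁ γ₂ : ℂ)
    (mul₁ mul₂ : (ℤ →₀ ℂ) →ₗ[ℂ] (ℤ →₀ ℂ) →ₗ[ℂ] (ℤ →₀ ℂ))
    (h₁ : ∀ n m : ℤ, mul₁ (W n) (W m) = (-(γ₁ + (m : ℂ) + 2 * n)) • W (m + n))
    (h₂ : ∀ n m : ℤ, mul₂ (W n) (W m) = (-(γ₂ + (m : ℂ) + 2 * n)) • W (m + n)) :
    (∃ T : (ℤ →₀ ℂ) ≃ₗ[ℂ] (ℤ →₀ ℂ),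
        ∀ x y : ℤ →₀ ℂ, T (mul₁ x y) = mul₂ (T x) (T y)) ↔
    (γ₁ = γ₂ ∨ γ₁ = -γ₂) := by
  have h₁ : IsAntiPreLieWitt γ₁ mul₁ := h₁
  have h₂ : IsAntiPreLieWitt γ₂ mul₂ := h₂
  constructor
  · rintro ⟨T, hT⟩
    exact h₁.eq_or_eq_neg_of_linearEquiv h₂ T hT
  · rintro (rfl | rfl)
    · exact ⟨LinearEquiv.refl ℂ _, fun x y => LinearMap.congr_fun₂ (h₁.unique h₂) x y⟩
    · exact ⟨reflect, h₁.reflect_mul h₂⟩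
end

section
/- Let γ ∈ ℂ, let S = ℤ →₀ ℂ with standard basis {W_m | m ∈ ℤ}, and let ∘ be the ℂ-bilinear operation on S determined by W_n ∘ W_m = −(γ + m + 2n)·W_{m+n}. Then (S, ∘) is an admissible Novikov algebra: for all x, y, z ∈ S, (x∘y)∘z − (x∘z)∘y = 2·x∘(y∘z − z∘y), and x∘(y∘z) − y∘(x∘z) = (y∘x − x∘y)∘z. -/
open LinearMap Module

theorem Module.Basis.ext₃ {R ι₁ ι₂ ι₃ M₁ M₂ M₃ N : Type*} [CommSemiring R]
    [AddCommMonoid M₁] [AddCommMonoid M₂] [AddCommMonoid M₃] [AddCommMonoid N]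
    [Module R M₁] [Module R M₂] [Module R M₃] [Module R N]
    (b₁ : Basis ι₁ R M₁) (b₂ : Basis ι₂ R M₂) (b₃ : Basis ι₃ R M₃)
    {F G : M₁ →ₗ[R] M₂ →ₗ[R] M₃ →ₗ[R] N}
    (h : ∀ i j k, F (b₁ i) (b₂ j) (b₃ k) = G (b₁ i) (b₂ j) (b₃ k)) :
    F = G :=
  b₁.ext fun i => b₂.ext fun j => b₃.ext fun k => h i j k

section AdmissibleNovikov

variable {R M : Type*} [CommRing R] [AddCommGroup M] [Module R M]

def IsAdmissibleNovikov (mul : M →ₗ[R] M →ₗ[R] M) : Prop :=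
  (∀ x y z : M, mul (mul x y) z - mul (mul x z) y = (2 : R) • mul x (mul y z - mul z y)) ∧
  (∀ x y z : M, mul x (mul y z) - mul y (mul x z) = mul (mul y x - mul x y) z)

section Trilinear

variable (mul : M →ₗ[R] M →ₗ[R] M)

def leftAssocProduct : M →ₗ[R] M →ₗ[R] M →ₗ[R] M := mul.compr₂ mul

def rightAssocProduct : M →ₗ[R] M →ₗ[R] M →ₗ[R] M :=
  (llcomp R M M M ∘ₗ mul).compl₂ mul

@[simp]
theorem leftAssocProduct_apply (x y z : M) : leftAssocProduct mul x y z = mul (mul x y) z := rfl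

@[simp]
theorem rightAssocProduct_apply (x y z : M) : rightAssocProduct mul x y z = mul x (mul y z) := rfl

theorem isAdmissibleNovikov_of_trilinear_eq
    (h₁ : leftAssocProduct mul - lflip.toLinearMap ∘ₗ leftAssocProduct mul =
      (2 : R) • (rightAssocProduct mul - lflip.toLinearMap ∘ₗ rightAssocProduct mul))
    (h₂ : rightAssocProduct mul - (rightAssocProduct mul).flip =
      (leftAssocProduct mul).flip - leftAssocProduct mul) :
    IsAdmissibleNovikov mul := by
  refine ⟨fun x y z => ?_, fun x y z => ?_⟩
  · simpa [map_sub, smul_sub] using congr($h₁ x y z)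
  · simpa using congr($h₂ x y z)

end Trilinear

section StructureConstants

variable {ι : Type*} [AddCommMonoid ι] (b : Basis ι R M) {c : ι → ι → R}
  {mul : M →ₗ[R] M →ₗ[R] M} (hmul : ∀ i j, mul (b i) (b j) = c i j • b (i + j))
include hmul

theorem leftAssocProduct_basis (i j k : ι) :
    leftAssocProduct mul (b i) (b j) (b k) = (c i j * c (i + j) k) • b (i + j + k) := by
  rw [leftAssocProduct_apply, hmul, map_smul, LinearMap.smul_apply, hmul, smul_smul]

theorem rightAssocProduct_basis (i j k : ι) :
    rightAssocProduct mul (b i) (b j) (b k) = (c j k * c i (j + k)) • b (i + j + k) := by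
  rw [rightAssocProduct_apply, hmul, map_smul, hmul, smul_smul, add_assoc]

theorem isAdmissibleNovikov_of_structure_constants
    (hc₁ : ∀ i j k,
      c i j * c (i + j) k - c i k * c (i + k) j = 2 * (c j k - c k j) * c i (j + k))
    (hc₂ : ∀ i j k, c j k * c i (j + k) - c i k * c j (i + k) = (c j i - c i j) * c (i + j) k) :
    IsAdmissibleNovikov mul := by
  apply isAdmissibleNovikov_of_trilinear_eq <;> refine b.ext₃ b b fun i j k => ?_
  · simp only [LinearMap.sub_apply, LinearMap.smul_apply, coe_comp, LinearEquiv.coe_coe,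
      Function.comp_apply, lflip_apply, flip_apply, leftAssocProduct_basis b hmul,
      rightAssocProduct_basis b hmul, add_right_comm i k j, add_comm k j]
    rw [← sub_smul, ← sub_smul, smul_smul, hc₁, mul_assoc, sub_mul]
  · simp only [LinearMap.sub_apply, flip_apply, leftAssocProduct_basis b hmul,
      rightAssocProduct_basis b hmul, add_comm j i]
    rw [← sub_smul, ← sub_smul, hc₂, sub_mul]

end StructureConstants

end AdmissibleNovikov

theorem stmt_18 (γ : ℂ)
    (mul : (ℤ →₀ ℂ) →ₗ[ℂ] (ℤ →₀ ℂ) →ₗ[ℂ] (ℤ →₀ ℂ))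
    (h : ∀ n m : ℤ, mul (W n) (W m) = (-(γ + (m : ℂ) + 2 * n)) • W (m + n)) :
    (∀ x y z : ℤ →₀ ℂ,
      mul (mul x y) z - mul (mul x z) y = (2 : ℂ) • mul x (mul y z - mul z y)) ∧
    (∀ x y z : ℤ →₀ ℂ,
      mul x (mul y z) - mul y (mul x z) = mul (mul y x - mul x y) z) :=
  isAdmissibleNovikov_of_structure_constants Finsupp.basisSingleOne
    (c := fun n m : ℤ => -(γ + m + 2 * n)) (fun n m => by rw [add_comm n m]; exact h n m)
    (fun i j k => by push_cast; ring) (fun i j k => by push_cast; ring)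
end

section
/- There do not exist γ ∈ ℂ and a function ψ : ℤ → ℂ such that both ψ(m) − ψ(−m) = (m³ − m)/12 for all m ∈ ℤ, and (γ + m − n)·ψ(n) − (γ + n − m)·ψ(m) = (m − n)·ψ(m+n) for all m,n ∈ ℤ. (Here ψ(m) plays the role of φ(m,−m), the coefficient of the central element c in W_m ∘ W_{−m}; this is the key nonexistence underlying the fact that there is no graded anti-pre-Lie algebraic structure on the Virasoro algebra.) -/
/-!
Putting `n = 0` in the cocycle identity gives `γ ψ(m) = (γ + m) ψ(0)`, so
`γ (ψ(m) - ψ(-m)) = 2 m ψ(0)`. Comparing with the prescribed skew part `(m³ - m)/12` at `m = 1`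
and `m = 2` forces `ψ(0) = 0` and then `γ = 0`. For `γ = 0` the identity reads
`(m - n)(ψ(m) + ψ(n) - ψ(m + n)) = 0`, so the skew part of `ψ` is additive on pairs `m ≠ n`;
but `m ↦ (m³ - m)/12` takes the values `0, 1/2, 2` at `1, 2, 3`.
-/

namespace Virasoro

variable {K : Type*} [Field K]

def CentralCocycle (γ : K) (ψ : ℤ → K) : Prop :=
  ∀ m n : ℤ, (γ + m - n) * ψ n - (γ + n - m) * ψ m = ((m : K) - n) * ψ (m + n)

namespace CentralCocycle

variable {γ : K} {ψ : ℤ → K}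

theorem mul_apply (h : CentralCocycle γ ψ) (m : ℤ) : γ * ψ m = (γ + m) * ψ 0 := by
  have h0 := h m 0
  simp only [Int.cast_zero, add_zero, sub_zero] at h0
  linear_combination -h0

theorem mul_sub_apply_neg (h : CentralCocycle γ ψ) (m : ℤ) :
    γ * (ψ m - ψ (-m)) = 2 * m * ψ 0 := by
  have hneg := h.mul_apply (-m)
  push_cast at hneg
  linear_combination h.mul_apply m - hneg

variable [CharZero K]

theorem apply_add_of_ne (h : CentralCocycle 0 ψ) {m n : ℤ} (hmn : m ≠ n) :
    ψ (m + n) = ψ m + ψ n := by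
  have hmn' : (m : K) - n ≠ 0 := sub_ne_zero.mpr (Int.cast_injective.ne hmn)
  refine mul_left_cancel₀ hmn' ?_
  linear_combination -h m n

theorem sub_apply_neg_add_of_ne (h : CentralCocycle 0 ψ) {m n : ℤ} (hmn : m ≠ n) :
    ψ (m + n) - ψ (-(m + n)) = (ψ m - ψ (-m)) + (ψ n - ψ (-n)) := by
  rw [neg_add, h.apply_add_of_ne hmn, h.apply_add_of_ne (neg_injective.ne hmn)]
  ring

theorem apply_zero_eq_zero (h : CentralCocycle γ ψ)
    (hskew : ∀ m : ℤ, ψ m - ψ (-m) = ((m : K) ^ 3 - m) / 12) : ψ 0 = 0 := by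
  have h1 := h.mul_sub_apply_neg 1
  rw [hskew 1] at h1
  norm_num at h1
  exact h1

theorem gamma_eq_zero (h : CentralCocycle γ ψ)
    (hskew : ∀ m : ℤ, ψ m - ψ (-m) = ((m : K) ^ 3 - m) / 12) : γ = 0 := by
  have h2 := h.mul_sub_apply_neg 2
  rw [hskew 2, h.apply_zero_eq_zero hskew] at h2
  norm_num at h2
  exact h2

end CentralCocycle

end Virasoro

open Virasoro in
theorem stmt_19 :
    ¬ ∃ (γ : ℂ) (ψ : ℤ → ℂ),
      (∀ m : ℤ, ψ m - ψ (-m) = ((m : ℂ) ^ 3 - m) / 12) ∧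
      (∀ m n : ℤ, (γ + m - n) * ψ n - (γ + n - m) * ψ m = ((m : ℂ) - n) * ψ (m + n)) := by
  rintro ⟨γ, ψ, hskew, hcocycle⟩
  have hγ : γ = 0 := CentralCocycle.gamma_eq_zero hcocycle hskew
  subst hγ
  have hadd := CentralCocycle.sub_apply_neg_add_of_ne hcocycle (m := 1) (n := 2) (by decide)
  rw [hskew, hskew, hskew] at hadd
  norm_num at hadd
end
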